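/- arXiv:1803.04449 — 11 statements merged into one kernel-verified Lean document; each statement's English description precedes it below -/
import Mathlib

section
/- Let $d_1, d_2 \geq 1$, let $X, Y$ be finite nonempty sets of measurement settings and let $A, B$ be finite outcome sets. Suppose the correlation $p(ab|xy)$ is produced without shared randomness from a shared pure quantum state, i.e. there exist a unit vector $\psi \in \mathbb{C}^{d_1} \otimes \mathbb{C}^{d_2}$ and POVMs $\{M_{a|x}\}_{a \in A}$ on $\mathbb{C}^{d_1}$ (each $M_{a|x}$ positive semidefinite with $\sum_a M_{a|x} = I$) and $\{N_{b|y}\}_{b \in B}$ on $\mathbb{C}^{d_2}$, such that $p(ab|xy) = \langle \psi, (M_{a|x} \otimes N_{b|y})\psi \rangle$ for all $a,b,x,y$. Then $f(p) \geq 1/\min\{d_1, d_2\}$, where $f(p) := \min_{y,y' \in Y} \sum_{b,b' \in B} \min_{x \in X} \big( \sum_{a \in A} \sqrt{p(ab|xy)\, p(ab'|xy')} \big)^2$. Equivalently, $\lceil 1/f(p) \rceil \leq \min\{d_1,d_2\}$ whenever $f(p) > 0$. -/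
open Kronecker Matrix
open scoped ComplexOrder

/-!
Viewing `ψ` as a `d₁ × d₂` matrix `Ψ`, Bob's effect `N_{b|y}` steers Alice's side to the positive
matrix `τ_{b|y} = Ψ N_{b|y}ᵀ Ψᴴ`, so that `p(ab|xy) = tr(M_{a|x} τ_{b|y})` and
`∑_b τ_{b|y} = ρ = Ψ Ψᴴ`. Writing positive matrices as `Rᴴ R` and inserting `1 = ∑_a M_{a|x}`,
the triangle inequality and submultiplicativity of the Frobenius norm give
`tr(τ τ') ≤ (∑_a √(tr(M_a τ) tr(M_a τ')))²` for every setting `x`. Summing over `b, b'` bounds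
`f(p)` below by the purity `tr ρ²`, and Cauchy–Schwarz on the diagonal of `ρ` (or of `Ψᴴ Ψ`,
which has the same purity) gives `1 = (tr ρ)² ≤ min(d₁, d₂) tr ρ²`.
-/

namespace Matrix

variable {k l m n : Type*} [Fintype k] [Fintype l] [Fintype m] [Fintype n]

theorem PosSemidef.exists_eq_conjTranspose_mul_self {A : Matrix n n ℂ} (hA : A.PosSemidef) :
    ∃ B : Matrix n n ℂ, A = Bᴴ * B := by
  classical
  open scoped MatrixOrder in
  exact CStarAlgebra.nonneg_iff_eq_star_mul_self.mp hA.nonneg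

section Frobenius

attribute [local instance] Matrix.frobeniusSeminormedAddCommGroup

theorem frobenius_norm_sq_eq_sum (A : Matrix m n ℂ) : ‖A‖ ^ 2 = ∑ i, ∑ j, ‖A i j‖ ^ 2 := by
  rw [frobenius_norm_def, ← Real.sqrt_eq_rpow, Real.sq_sqrt (by positivity)]
  simp only [Real.rpow_two]

theorem frobenius_norm_sq_eq_re_trace (A : Matrix m n ℂ) : ‖A‖ ^ 2 = (Aᴴ * A).trace.re := by
  simp only [frobenius_norm_sq_eq_sum, trace, diag_apply, mul_apply, conjTranspose_apply,
    Complex.re_sum, Complex.star_def, Complex.conj_mul', ← Complex.ofReal_pow, Complex.ofReal_re]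
  exact Finset.sum_comm

theorem frobenius_norm_mul_conjTranspose_sq (A : Matrix m n ℂ) (B : Matrix l n ℂ) :
    ‖A * Bᴴ‖ ^ 2 = (Aᴴ * A * (Bᴴ * B)).trace.re := by
  rw [← frobenius_norm_conjTranspose, frobenius_norm_sq_eq_re_trace, conjTranspose_conjTranspose,
    conjTranspose_mul, conjTranspose_conjTranspose, ← Matrix.mul_assoc, trace_mul_comm]
  simp only [Matrix.mul_assoc]

theorem re_trace_mul_conjTranspose_self (A : Matrix m n ℂ) :
    (A * Aᴴ).trace.re = ∑ i, ∑ j, ‖A i j‖ ^ 2 := by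
  rw [← frobenius_norm_sq_eq_sum, ← frobenius_norm_conjTranspose, frobenius_norm_sq_eq_re_trace,
    conjTranspose_conjTranspose]

theorem frobenius_norm_mul_conjTranspose_le_sum [DecidableEq n] {ι : Type*} [Fintype ι]
    (R : ι → Matrix m n ℂ) (hR : ∑ i, (R i)ᴴ * R i = 1) (S : Matrix k n ℂ) (T : Matrix l n ℂ) :
    ‖S * Tᴴ‖ ≤ ∑ i, ‖R i * Sᴴ‖ * ‖R i * Tᴴ‖ := by
  have hdecomp : S * Tᴴ = ∑ i, (R i * Sᴴ)ᴴ * (R i * Tᴴ) :=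
    calc S * Tᴴ = S * (∑ i, (R i)ᴴ * R i) * Tᴴ := by rw [hR, Matrix.mul_one]
      _ = ∑ i, (R i * Sᴴ)ᴴ * (R i * Tᴴ) := by
        simp only [Matrix.mul_sum, Matrix.sum_mul, conjTranspose_mul, conjTranspose_conjTranspose,
          Matrix.mul_assoc]
  calc ‖S * Tᴴ‖ ≤ ∑ i, ‖(R i * Sᴴ)ᴴ * (R i * Tᴴ)‖ := hdecomp ▸ norm_sum_le _ _
    _ ≤ ∑ i, ‖R i * Sᴴ‖ * ‖R i * Tᴴ‖ := by
      gcongr with i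
      exact (frobenius_norm_mul _ _).trans_eq (by rw [frobenius_norm_conjTranspose])

theorem PosSemidef.re_trace_mul_le_sq_sum_sqrt [DecidableEq n] {ι : Type*} [Fintype ι]
    {M : ι → Matrix n n ℂ} (hM : ∀ i, (M i).PosSemidef) (hM_sum : ∑ i, M i = 1)
    {σ τ : Matrix n n ℂ} (hσ : σ.PosSemidef) (hτ : τ.PosSemidef) :
    (σ * τ).trace.re ≤ (∑ i, √((M i * σ).trace.re * (M i * τ).trace.re)) ^ 2 := by
  choose R hR using fun i => (hM i).exists_eq_conjTranspose_mul_self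
  obtain rfl : M = fun i => (R i)ᴴ * R i := funext hR
  obtain ⟨S, rfl⟩ := hσ.exists_eq_conjTranspose_mul_self
  obtain ⟨T, rfl⟩ := hτ.exists_eq_conjTranspose_mul_self
  simp only [← frobenius_norm_mul_conjTranspose_sq, ← mul_pow,
    Real.sqrt_sq (mul_nonneg (norm_nonneg _) (norm_nonneg _))]
  gcongr
  exact frobenius_norm_mul_conjTranspose_le_sum R hM_sum S T

theorem IsHermitian.sq_re_trace_le_card_mul {B : Matrix n n ℂ} (hB : B.IsHermitian) :
    B.trace.re ^ 2 ≤ Fintype.card n * (B * B).trace.re := by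
  have hBB : B * B = Bᴴ * B := by rw [hB.eq]
  rw [hBB, ← frobenius_norm_sq_eq_re_trace, frobenius_norm_sq_eq_sum]
  calc B.trace.re ^ 2 = (∑ i, (B i i).re) ^ 2 := by rw [trace, Complex.re_sum]; rfl
    _ ≤ Fintype.card n * ∑ i, (B i i).re ^ 2 := sq_sum_le_card_mul_sum_sq
    _ ≤ Fintype.card n * ∑ i, ∑ j, ‖B i j‖ ^ 2 := by
      gcongr with i
      calc (B i i).re ^ 2 ≤ ‖B i i‖ ^ 2 := by
            rw [← sq_abs]; gcongr; exact Complex.abs_re_le_norm _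
        _ ≤ ∑ j, ‖B i j‖ ^ 2 :=
          Finset.single_le_sum (f := fun j => ‖B i j‖ ^ 2) (fun _ _ => by positivity)
            (Finset.mem_univ i)

theorem sq_re_trace_mul_conjTranspose_self_le (A : Matrix m n ℂ) :
    (A * Aᴴ).trace.re ^ 2 ≤
      min (Fintype.card m : ℝ) (Fintype.card n) * (A * Aᴴ * (A * Aᴴ)).trace.re := by
  have hnonneg : 0 ≤ (A * Aᴴ * (A * Aᴴ)).trace.re := by
    have h := frobenius_norm_mul_conjTranspose_sq Aᴴ Aᴴ
    rw [conjTranspose_conjTranspose] at h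
    exact h ▸ sq_nonneg _
  have hswap : (Aᴴ * A * (Aᴴ * A)).trace = (A * Aᴴ * (A * Aᴴ)).trace := by
    simp only [Matrix.mul_assoc]
    rw [trace_mul_comm]
    simp only [Matrix.mul_assoc]
  rw [min_mul_of_nonneg _ _ hnonneg]
  refine le_min (isHermitian_mul_conjTranspose_self A).sq_re_trace_le_card_mul ?_
  simpa only [trace_mul_comm Aᴴ A, hswap] using
    (isHermitian_conjTranspose_mul_self A).sq_re_trace_le_card_mul

end Frobenius

theorem star_dotProduct_kronecker_mulVec {R : Type*} [CommRing R] [StarRing R]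
    (M : Matrix m m R) (N : Matrix n n R) (ψ : m × n → R) :
    star ψ ⬝ᵥ ((M ⊗ₖ N) *ᵥ ψ) =
      (M * (of (Function.curry ψ) * Nᵀ * (of (Function.curry ψ))ᴴ)).trace := by
  simp only [dotProduct, mulVec, kroneckerMap_apply, Pi.star_apply, trace, diag_apply, mul_apply,
    conjTranspose_apply, of_apply, transpose_apply, Function.curry_apply, Fintype.sum_prod_type,
    Finset.mul_sum, Finset.sum_mul]
  refine Finset.sum_congr rfl fun i _ => ?_
  rw [Finset.sum_comm]
  refine Finset.sum_congr rfl fun i' _ => Finset.sum_congr rfl fun j _ =>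
    Finset.sum_congr rfl fun j' _ => ?_
  ring

end Matrix

theorem one_div_le_and_ceil_one_div_le {k : ℕ} {f : ℝ} (h : 1 ≤ k * f) :
    1 / (k : ℝ) ≤ f ∧ (0 < f → ⌈1 / f⌉ ≤ (k : ℤ)) := by
  have hk : (0 : ℝ) < k := Nat.cast_pos.mpr (Nat.pos_of_ne_zero (by rintro rfl; norm_num at h))
  refine ⟨by rw [div_le_iff₀ hk]; linarith, fun hf => Int.ceil_le.mpr ?_⟩
  rw [div_le_iff₀ hf]
  push_cast
  linarith

theorem dimension_witness_bound_general
    (d₁ d₂ : ℕ)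
    (X Y A B : Type) [Fintype X] [Fintype Y] [Fintype A] [Fintype B]
    [Nonempty X] [Nonempty Y]
    (ψ : Fin d₁ × Fin d₂ → ℂ) (hψ : ∑ i, ‖ψ i‖ ^ 2 = 1)
    (M : X → A → Matrix (Fin d₁) (Fin d₁) ℂ)
    (N : Y → B → Matrix (Fin d₂) (Fin d₂) ℂ)
    (hMpos : ∀ x a, (M x a).PosSemidef)
    (hMsum : ∀ x, ∑ a, M x a = 1)
    (hNpos : ∀ y b, (N y b).PosSemidef)
    (hNsum : ∀ y, ∑ b, N y b = 1)
    (p : A → B → X → Y → ℝ)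
    (hp : ∀ a b x y, (p a b x y : ℂ) = star ψ ⬝ᵥ ((M x a ⊗ₖ N y b) *ᵥ ψ))
    (fval : ℝ)
    (hf : fval =
      Finset.univ.inf' Finset.univ_nonempty (fun yy' : Y × Y =>
        ∑ b : B, ∑ b' : B,
          Finset.univ.inf' Finset.univ_nonempty (fun x : X =>
            (∑ a : A, Real.sqrt (p a b x yy'.1 * p a b' x yy'.2)) ^ 2))) :
    1 / (min d₁ d₂ : ℝ) ≤ fval ∧
    (0 < fval → ⌈1 / fval⌉ ≤ (min d₁ d₂ : ℤ)) := by
  set Ψ := of (Function.curry ψ)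
  set ρ := Ψ * Ψᴴ
  set τ : Y → B → Matrix (Fin d₁) (Fin d₁) ℂ := fun y b => Ψ * (N y b)ᵀ * Ψᴴ
  have hτ : ∀ y b, (τ y b).PosSemidef := fun y b =>
    (hNpos y b).transpose.mul_mul_conjTranspose_same Ψ
  have hτ_sum : ∀ y, ∑ b, τ y b = ρ := fun y => by
    rw [← Matrix.sum_mul, ← Matrix.mul_sum, ← transpose_sum, hNsum y, transpose_one, Matrix.mul_one]
  have hp_trace : ∀ a b x y, p a b x y = (M x a * τ y b).trace.re := fun a b x y => by
    rw [← Complex.ofReal_re (p a b x y), hp, star_dotProduct_kronecker_mulVec]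
  have hρ_trace : ρ.trace.re = 1 := by
    rw [re_trace_mul_conjTranspose_self, ← hψ, Fintype.sum_prod_type]
    rfl
  have hpurity : 1 ≤ (min d₁ d₂ : ℝ) * (ρ * ρ).trace.re := by
    calc 1 = ρ.trace.re ^ 2 := by rw [hρ_trace, one_pow]
      _ ≤ _ := by simpa only [Fintype.card_fin] using sq_re_trace_mul_conjTranspose_self_le Ψ
  have hpair : ∀ y y', (ρ * ρ).trace.re ≤ ∑ b : B, ∑ b' : B,
      Finset.univ.inf' Finset.univ_nonempty (fun x : X =>
        (∑ a : A, Real.sqrt (p a b x y * p a b' x y')) ^ 2) := fun y y' => by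
    rw [show ρ * ρ = (∑ b, τ y b) * ∑ b', τ y' b' by rw [hτ_sum, hτ_sum], Finset.sum_mul_sum]
    simp only [trace_sum, Complex.re_sum]
    gcongr with b _ b' _
    refine Finset.le_inf' _ _ fun x _ => ?_
    simpa only [hp_trace] using (hτ y b).re_trace_mul_le_sq_sum_sqrt (hMpos x) (hMsum x) (hτ y' b')
  have hfval : 1 ≤ ((min d₁ d₂ : ℕ) : ℝ) * fval := by
    rw [Nat.cast_min, hf]
    refine hpurity.trans (by gcongr; exact Finset.le_inf' _ _ fun yy' _ => hpair yy'.1 yy'.2)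
  simpa only [Nat.cast_min] using one_div_le_and_ceil_one_div_le hfval

/-- Device-independent dimension witness (Sikora–Varvitsiotis–Wei): if a bipartite
correlation `p(ab|xy)` is produced without shared randomness from a pure state
`ψ ∈ ℂ^{d₁} ⊗ ℂ^{d₂}` via POVMs `{M_{a|x}}` and `{N_{b|y}}`, then
`f(p) ≥ 1 / min{d₁, d₂}`, where
`f(p) = min_{y,y'} ∑_{b,b'} min_x (∑_a √(p(ab|xy) p(ab'|xy')))²`.
Equivalently, `⌈1/f(p)⌉ ≤ min{d₁,d₂}` whenever `f(p) > 0`. -/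
theorem dimension_witness_bound
    (d₁ d₂ : ℕ) (hd₁ : 1 ≤ d₁) (hd₂ : 1 ≤ d₂)
    (X Y A B : Type) [Fintype X] [Fintype Y] [Fintype A] [Fintype B]
    [Nonempty X] [Nonempty Y]
    (ψ : Fin d₁ × Fin d₂ → ℂ) (hψ : ∑ i, ‖ψ i‖ ^ 2 = 1)
    (M : X → A → Matrix (Fin d₁) (Fin d₁) ℂ)
    (N : Y → B → Matrix (Fin d₂) (Fin d₂) ℂ)
    (hMpos : ∀ x a, (M x a).PosSemidef)
    (hMsum : ∀ x, ∑ a, M x a = 1)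
    (hNpos : ∀ y b, (N y b).PosSemidef)
    (hNsum : ∀ y, ∑ b, N y b = 1)
    (p : A → B → X → Y → ℝ)
    (hp : ∀ a b x y, (p a b x y : ℂ) = star ψ ⬝ᵥ ((M x a ⊗ₖ N y b) *ᵥ ψ))
    (fval : ℝ)
    (hf : fval =
      Finset.univ.inf' Finset.univ_nonempty (fun yy' : Y × Y =>
        ∑ b : B, ∑ b' : B,
          Finset.univ.inf' Finset.univ_nonempty (fun x : X =>
            (∑ a : A, Real.sqrt (p a b x yy'.1 * p a b' x yy'.2)) ^ 2))) :
    1 / (min d₁ d₂ : ℝ) ≤ fval ∧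
    (0 < fval → ⌈1 / fval⌉ ≤ (min d₁ d₂ : ℤ)) :=
  dimension_witness_bound_general d₁ d₂ X Y A B ψ hψ M N hMpos hMsum hNpos hNsum p hp fval hf
end

section
/- Let $C^+ = \{c \in \{+1,-1\}^4 : c_1 c_2 c_3 c_4 = 1\}$ and $C^- = \{c \in \{+1,-1\}^4 : c_1 c_2 c_3 c_4 = -1\}$ (so $|C^+| = |C^-| = 8$). Fix coordinate indices $i, j \in \{1,2,3,4\}$ and suppose the correlation $p$ satisfies: $p(ab|33) = \tfrac{1}{8}\,\delta_{ab}$ for $a, b \in C^+$, and $p(ab'|35) = \tfrac{1}{32}$ if $a_i = b'_j$ and $0$ otherwise, for $a \in C^+$, $b' \in C^-$. Then $f_{y=3, y'=5, x=3}(p) := \sum_{b \in C^+, \, b' \in C^-} \big( \sum_{a \in C^+} \sqrt{p(ab|33)\, p(ab'|35)} \big)^2 = 1/8$. Consequently, observing this correlation certifies local dimension at least $8$. -/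
/-- Sign 4-tuples of product `+1`. -/
abbrev PentagramCplus : Type := {c : Fin 4 → ℤˣ // c 0 * c 1 * c 2 * c 3 = 1}

/-- Sign 4-tuples of product `-1`. -/
abbrev PentagramCminus : Type := {c : Fin 4 → ℤˣ // c 0 * c 1 * c 2 * c 3 = -1}

lemma pentagram_card_plus : Fintype.card PentagramCplus = 8 := by decide

lemma pentagram_card_minus : Fintype.card PentagramCminus = 8 := by decide

lemma pentagram_pair_count (i j : Fin 4) :
    ((Finset.univ : Finset (PentagramCplus × PentagramCminus)).filter
      (fun x => x.1.val i = x.2.val j)).card = 32 := by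
  revert i j; decide

/-- For the ideal Magic Pentagram correlation (perfect uniform agreement when both
parties use line 3; uniform agreement on the intersection point, coordinate `i` of
line 3 and coordinate `j` of line 5, when the lines 3 and 5 are used), one has
`|C⁺| = |C⁻| = 8` and the dimension-witness quantity with settings `y = 3`, `y' = 5`,
`x = 3` equals `f_{3,5,3}(p) = ∑_{b ∈ C⁺, b' ∈ C⁻} (∑_{a ∈ C⁺} √(p(ab|33) p(ab'|35)))² = 1/8`,
certifying local dimension at least `8`. -/
theorem magic_pentagram_witness_value
    (i j : Fin 4)
    (p33 : PentagramCplus → PentagramCplus → ℝ)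
    (p35 : PentagramCplus → PentagramCminus → ℝ)
    (h33 : ∀ a b, p33 a b = if a = b then 1 / 8 else 0)
    (h35 : ∀ a b', p35 a b' = if a.val i = b'.val j then 1 / 32 else 0) :
    Fintype.card PentagramCplus = 8 ∧ Fintype.card PentagramCminus = 8 ∧
    ∑ b : PentagramCplus, ∑ b' : PentagramCminus,
      (∑ a : PentagramCplus, Real.sqrt (p33 a b * p35 a b')) ^ 2 = 1 / 8 := by
  refine ⟨pentagram_card_plus, pentagram_card_minus, ?_⟩
  have hinner : ∀ (b : PentagramCplus) (b' : PentagramCminus),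
      (∑ a : PentagramCplus, Real.sqrt (p33 a b * p35 a b')) ^ 2
        = if b.val i = b'.val j then (1:ℝ)/256 else 0 := by
    intro b b'
    have hsum : ∑ a : PentagramCplus, Real.sqrt (p33 a b * p35 a b')
        = Real.sqrt (p33 b b * p35 b b') := by
      apply Finset.sum_eq_single
      · intro a _ ha
        rw [h33]; simp [ha]
      · intro h; exact absurd (Finset.mem_univ b) h
    rw [hsum, h33, h35]
    by_cases h : b.val i = b'.val j
    · simp only [h, if_true, if_pos rfl]
      rw [Real.sq_sqrt (by norm_num)]
      norm_num
    · simp [h]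
  calc ∑ b : PentagramCplus, ∑ b' : PentagramCminus,
        (∑ a : PentagramCplus, Real.sqrt (p33 a b * p35 a b')) ^ 2
      = ∑ b : PentagramCplus, ∑ b' : PentagramCminus,
        (if b.val i = b'.val j then (1:ℝ)/256 else 0) := by
        exact Finset.sum_congr rfl fun b _ => Finset.sum_congr rfl fun b' _ => hinner b b'
    _ = ∑ x : PentagramCplus × PentagramCminus,
        (if x.1.val i = x.2.val j then (1:ℝ)/256 else 0) := by
        rw [← Finset.sum_product', Finset.univ_product_univ]
    _ = ((Finset.univ : Finset (PentagramCplus × PentagramCminus)).filter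
          (fun x => x.1.val i = x.2.val j)).card * ((1:ℝ)/256) := by
        rw [← Finset.sum_filter, Finset.sum_const, nsmul_eq_mul]
    _ = 1 / 8 := by rw [pentagram_pair_count]; norm_num
end

section
/- Let $p$ be the ideal Magic Square correlation: $A = \{a \in \{+1,-1\}^3 : a_1 a_2 a_3 = 1\}$, $B = \{b \in \{+1,-1\}^3 : b_1 b_2 b_3 = -1\}$, settings $x, y \in \{1,2,3\}$, $p(ab|xy) = 1/8$ if $a_y = b_x$ and $0$ otherwise. Define the two-copy correlation on outcome sets $A \times A$ and $B \times B$ with settings in $\{1,2,3\}^2$ by $p_2\big((a,\tilde a)(b,\tilde b)\,\big|\,(x,\tilde x)(y,\tilde y)\big) := p(ab|xy)\, p(\tilde a \tilde b|\tilde x \tilde y)$. Then $f_{y=(1,1),\, y'=(2,2),\, x=(1,1)}(p_2) = 1/16$. Consequently, observing this correlation certifies local dimension at least $16$. -/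
/-- Alice's outcomes in the Magic Square game: sign triples of product `+1`. -/
abbrev MagicSquareA : Type := {a : Fin 3 → ℤˣ // a 0 * a 1 * a 2 = 1}

/-- Bob's outcomes in the Magic Square game: sign triples of product `-1`. -/
abbrev MagicSquareB : Type := {b : Fin 3 → ℤˣ // b 0 * b 1 * b 2 = -1}

private def eA : MagicSquareA ≃ ℤˣ × ℤˣ where
  toFun a := (a.val 0, a.val 1)
  invFun s := ⟨![s.1, s.2, s.1 * s.2], by
    show s.1 * s.2 * (s.1 * s.2) = 1
    rw [mul_mul_mul_comm, Int.units_mul_self, Int.units_mul_self, one_mul]⟩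
  left_inv a := Subtype.ext (funext fun i => by
    fin_cases i
    · rfl
    · rfl
    · show a.val 0 * a.val 1 = a.val 2
      calc a.val 0 * a.val 1 = a.val 0 * a.val 1 * (a.val 2 * a.val 2) := by
            rw [Int.units_mul_self, mul_one]
        _ = a.val 0 * a.val 1 * a.val 2 * a.val 2 := (mul_assoc _ _ _).symm
        _ = a.val 2 := by rw [a.prop, one_mul])
  right_inv s := rfl

private def eB : MagicSquareB ≃ ℤˣ × ℤˣ where
  toFun b := (b.val 0, b.val 1)
  invFun s := ⟨![s.1, s.2, -(s.1 * s.2)], by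
    show s.1 * s.2 * -(s.1 * s.2) = -1
    rw [mul_neg, mul_mul_mul_comm, Int.units_mul_self, Int.units_mul_self, one_mul]⟩
  left_inv b := Subtype.ext (funext fun i => by
    fin_cases i
    · rfl
    · rfl
    · show -(b.val 0 * b.val 1) = b.val 2
      calc -(b.val 0 * b.val 1) = -(b.val 0 * b.val 1 * (b.val 2 * b.val 2)) := by
            rw [Int.units_mul_self, mul_one]
        _ = -(b.val 0 * b.val 1 * b.val 2 * b.val 2) := congrArg Neg.neg (mul_assoc _ _ _).symm
        _ = b.val 2 := by rw [b.prop]; simp)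
  right_inv s := rfl

private lemma eA_symm_0 (s : ℤˣ × ℤˣ) : (eA.symm s).val 0 = s.1 := rfl
private lemma eA_symm_1 (s : ℤˣ × ℤˣ) : (eA.symm s).val 1 = s.2 := rfl

private lemma sqrt_val : Real.sqrt ((1/8 * (1/8)) * (1/8 * (1/8)) : ℝ) = 1/64 := by
  rw [show ((1/8 * (1/8)) * (1/8 * (1/8)) : ℝ) = (1/64)^2 by norm_num, Real.sqrt_sq]
  norm_num

/-- For two parallel copies of the ideal Magic Square correlation,
`p₂((a,ã)(b,b̃)|(x,x̃)(y,ỹ)) = p(ab|xy) p(ãb̃|x̃ỹ)` where `p(ab|xy) = 1/8` if `a_y = b_x`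
and `0` otherwise, the dimension-witness quantity with settings `y = (1,1)`,
`y' = (2,2)`, `x = (1,1)` equals `f_{(1,1),(2,2),(1,1)}(p₂) = 1/16`,
certifying local dimension at least `16`. -/
theorem magic_square_two_copies_witness_value
    (p : MagicSquareA → MagicSquareB → Fin 3 → Fin 3 → ℝ)
    (hp : ∀ a b x y, p a b x y = if a.val y = b.val x then 1 / 8 else 0)
    (p₂ : MagicSquareA × MagicSquareA → MagicSquareB × MagicSquareB →
          Fin 3 × Fin 3 → Fin 3 × Fin 3 → ℝ)
    (hp₂ : ∀ aa bb xx yy,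
      p₂ aa bb xx yy = p aa.1 bb.1 xx.1 yy.1 * p aa.2 bb.2 xx.2 yy.2) :
    ∑ bb : MagicSquareB × MagicSquareB, ∑ bb' : MagicSquareB × MagicSquareB,
      (∑ aa : MagicSquareA × MagicSquareA,
        Real.sqrt (p₂ aa bb (0, 0) (0, 0) * p₂ aa bb' (0, 0) (1, 1))) ^ 2
      = 1 / 16 := by
  have hinner : ∀ bb bb' : MagicSquareB × MagicSquareB,
      (∑ aa : MagicSquareA × MagicSquareA,
        Real.sqrt (p₂ aa bb (0, 0) (0, 0) * p₂ aa bb' (0, 0) (1, 1))) = 1/64 := by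
    intro bb bb'
    rw [← Equiv.sum_comp (eA.prodCongr eA).symm
      (fun aa => Real.sqrt (p₂ aa bb (0, 0) (0, 0) * p₂ aa bb' (0, 0) (1, 1)))]
    have key : ∀ x : (ℤˣ × ℤˣ) × (ℤˣ × ℤˣ),
        Real.sqrt (p₂ ((eA.prodCongr eA).symm x) bb (0, 0) (0, 0) *
          p₂ ((eA.prodCongr eA).symm x) bb' (0, 0) (1, 1))
        = if x = ((bb.1.val 0, bb'.1.val 0), (bb.2.val 0, bb'.2.val 0)) then 1/64 else 0 := by
      rintro ⟨⟨s, t⟩, ⟨u, v⟩⟩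
      simp only [hp₂, hp, Equiv.prodCongr_symm, Equiv.prodCongr_apply, Prod.map,
        eA_symm_0, eA_symm_1, Prod.mk.injEq]
      by_cases h1 : s = bb.1.val 0 <;> by_cases h2 : t = bb'.1.val 0 <;>
        by_cases h3 : u = bb.2.val 0 <;> by_cases h4 : v = bb'.2.val 0 <;>
        simp [h1, h2, h3, h4, sqrt_val] <;> norm_num
    rw [Finset.sum_congr rfl (fun x _ => key x)]
    simp
  calc ∑ bb : MagicSquareB × MagicSquareB, ∑ bb' : MagicSquareB × MagicSquareB,
      (∑ aa : MagicSquareA × MagicSquareA,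
        Real.sqrt (p₂ aa bb (0, 0) (0, 0) * p₂ aa bb' (0, 0) (1, 1))) ^ 2
      = ∑ _bb : MagicSquareB × MagicSquareB, ∑ _bb' : MagicSquareB × MagicSquareB,
          ((1:ℝ)/64)^2 := by
        refine Finset.sum_congr rfl fun bb _ => Finset.sum_congr rfl fun bb' _ => ?_
        rw [hinner]
    _ = 1/16 := by
        have hcard : Fintype.card MagicSquareB = 4 := by
          rw [Fintype.card_congr eB]; simp
        rw [Finset.sum_const, Finset.sum_const, Finset.card_univ, Fintype.card_prod, hcard]
        norm_num [nsmul_eq_mul]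
end

section
/- There is no $3 \times 3$ matrix with entries in $\{+1, -1\}$ such that the product of the entries in each row equals $+1$ and the product of the entries in each column equals $-1$. Consequently, the Magic Square game cannot be won with certainty by deterministic classical strategies: there are no functions $a : \{1,2,3\} \to \{+1,-1\}^3$ with $a(x)_1 a(x)_2 a(x)_3 = 1$ for all $x$ and $b : \{1,2,3\} \to \{+1,-1\}^3$ with $b(y)_1 b(y)_2 b(y)_3 = -1$ for all $y$, satisfying $a(x)_y = b(y)_x$ for all $x, y \in \{1,2,3\}$. -/
lemma magic_square_aux :
    ¬ ∃ M : Fin 3 → Fin 3 → ℤˣ,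
        (∀ i, M i 0 * M i 1 * M i 2 = 1) ∧
        (∀ j, M 0 j * M 1 j * M 2 j = -1) := by
  rintro ⟨M, hr, hc⟩
  have h1 := hr 0; have h2 := hr 1; have h3 := hr 2
  have c1 := hc 0; have c2 := hc 1; have c3 := hc 2
  have key : (1 : ℤˣ) = -1 := by
    calc (1 : ℤˣ) = (M 0 0*M 0 1*M 0 2)*(M 1 0*M 1 1*M 1 2)*(M 2 0*M 2 1*M 2 2) := by
          rw [h1, h2, h3]; decide
    _ = (M 0 0*M 1 0*M 2 0)*(M 0 1*M 1 1*M 2 1)*(M 0 2*M 1 2*M 2 2) := by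
          simp only [mul_assoc, mul_comm, mul_left_comm]
    _ = -1 := by rw [c1, c2, c3]; decide
  exact absurd key (by decide)

/-- There is no 3×3 matrix of signs whose rows all have product `+1` and whose columns
all have product `-1`; consequently, the Magic Square game cannot be won with certainty
by deterministic classical strategies. -/
theorem magic_square_no_classical_win :
    (¬ ∃ M : Fin 3 → Fin 3 → ℤˣ,
        (∀ i, M i 0 * M i 1 * M i 2 = 1) ∧
        (∀ j, M 0 j * M 1 j * M 2 j = -1)) ∧
    (¬ ∃ (a : Fin 3 → Fin 3 → ℤˣ) (b : Fin 3 → Fin 3 → ℤˣ),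
        (∀ x, a x 0 * a x 1 * a x 2 = 1) ∧
        (∀ y, b y 0 * b y 1 * b y 2 = -1) ∧
        (∀ x y, a x y = b y x)) := by
  refine ⟨magic_square_aux, ?_⟩
  rintro ⟨a, b, ha, hb, hab⟩
  exact magic_square_aux ⟨a, ha, fun j => by rw [hab 0 j, hab 1 j, hab 2 j]; exact hb j⟩
end

section
/- Fix an integer $d \geq 2$, let $\omega = e^{2\pi i/d}$ and $a_l = \tfrac{1}{\sqrt{2}}\, e^{i\pi(2l-d)/(4d)}$ for $l = 1, \dots, d-1$. For any integers $\alpha_1, \alpha_2, \beta_1, \beta_2$ (deterministic outcomes of a local hidden variable strategy), define $\tilde{I}_d := \sum_{l=1}^{d-1} \big[ a_l\, \omega^{l(\alpha_1 - \beta_1)} + \overline{a_l}\, \omega^{l(1 + \alpha_1 - \beta_2)} + a_l\, \omega^{l(\alpha_2 - \beta_2)} + \overline{a_l}\, \omega^{l(\alpha_2 - \beta_1)} \big]$. Then $\tilde{I}_d$ is a real number and $\tilde{I}_d \leq \mathcal{C}_d := \tfrac{1}{2}\big[ 3 \cot\big(\tfrac{\pi}{4d}\big) - \cot\big(\tfrac{3\pi}{4d}\big)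 \big] - 2$. -/
/-!
Write `θ = π (4k + 1) / (4d)` and `q = e^{2iθ}`. Then `a_l ω^{lk} = (1 - i)/2 · q^l` and `q^d = i`,
so each correlator sum `∑_l a_l ω^{lk}` is a geometric series equal to `(cot θ - 1)/2`; the
conjugated terms are the conjugates of such sums, with `4k + 1` replaced by `1 - 4k`. Hence
`Ĩ_d = ½ ∑ᵢ cot (π uᵢ / 4d) - 2` with `uᵢ ≡ 1 (mod 4)` and `∑ uᵢ = 0`.

Reducing modulo `π`, the four angles lie in `[c, π - 3c]` with `c = π / 4d` and add up to `tπ`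
with `t ∈ {1, 2, 3}`. Moving two angles apart while keeping their sum `≤ π` fixed increases
`cot a + cot b`, and a pair with sum `≥ π` contributes `≤ 0`. So the sum of cotangents is at most
its value `3 cot c - cot 3c` at `(c, c, c, π - 3c)`.
-/

open Complex

namespace Real

lemma cot_periodic : Function.Periodic cot π := fun x => by
  simp only [← tan_inv_eq_cot, tan_add_pi]

lemma cot_pi_sub (x : ℝ) : cot (π - x) = -cot x := by
  rw [← tan_inv_eq_cot, ← tan_inv_eq_cot, tan_pi_sub, inv_neg]

lemma cot_nonneg {x : ℝ} (hx₀ : 0 < x) (hx : x ≤ π / 2) : 0 ≤ cot x := by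
  rw [cot_eq_cos_div_sin]
  exact div_nonneg (cos_nonneg_of_mem_Icc ⟨by linarith [pi_pos], hx⟩)
    (sin_nonneg_of_nonneg_of_le_pi hx₀.le (by linarith [pi_pos]))

lemma cot_le_cot {a b : ℝ} (ha : 0 < a) (hab : a ≤ b) (hb : b < π) : cot b ≤ cot a := by
  have hsa : 0 < sin a := sin_pos_of_pos_of_lt_pi ha (hab.trans_lt hb)
  have hsb : 0 < sin b := sin_pos_of_pos_of_lt_pi (ha.trans_le hab) hb
  have hba : 0 ≤ sin (b - a) := sin_nonneg_of_nonneg_of_le_pi (by linarith) (by linarith)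
  rw [sin_sub] at hba
  rw [cot_eq_cos_div_sin, cot_eq_cos_div_sin, div_le_div_iff₀ hsb hsa]
  linarith

lemma cot_add_cot {a b : ℝ} (ha : sin a ≠ 0) (hb : sin b ≠ 0) :
    cot a + cot b = sin (a + b) / (sin a * sin b) := by
  rw [cot_eq_cos_div_sin, cot_eq_cos_div_sin, sin_add]
  field

lemma cot_add_cot_nonpos {a b : ℝ} (ha : 0 < a) (ha' : a < π) (hb : 0 < b) (hb' : b < π)
    (hab : π ≤ a + b) : cot a + cot b ≤ 0 := by
  have hsa := sin_pos_of_pos_of_lt_pi ha ha'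
  have hsb := sin_pos_of_pos_of_lt_pi hb hb'
  have hsab : 0 ≤ sin (a + b - π) := sin_nonneg_of_nonneg_of_le_pi (by linarith) (by linarith)
  rw [sin_sub_pi] at hsab
  rw [cot_add_cot hsa.ne' hsb.ne']
  exact div_nonpos_of_nonpos_of_nonneg (by linarith) (mul_pos hsa hsb).le

lemma cot_add_cot_le_cot_add_cot {a b c : ℝ} (hc : 0 < c) (hca : c ≤ a) (hcb : c ≤ b)
    (hab : a + b ≤ π) : cot a + cot b ≤ cot c + cot (a + b - c) := by
  have hsa := sin_pos_of_pos_of_lt_pi (hc.trans_le hca) (by linarith)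
  have hsb := sin_pos_of_pos_of_lt_pi (hc.trans_le hcb) (by linarith)
  have hsc := sin_pos_of_pos_of_lt_pi hc (by linarith)
  have hsd := sin_pos_of_pos_of_lt_pi (x := a + b - c) (by linarith) (by linarith)
  rw [cot_add_cot hsa.ne' hsb.ne', cot_add_cot hsc.ne' hsd.ne', add_sub_cancel]
  have hprod : sin c * sin (a + b - c) ≤ sin a * sin b := by
    have hcos : cos (c - (a + b - c)) ≤ cos (a - b) := by
      rw [← cos_abs (a - b), ← cos_abs]
      exact cos_le_cos_of_nonneg_of_le_pi (abs_nonneg _) (by rw [abs_le]; constructor <;> linarith)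
        (by rw [abs_le, abs_of_nonpos (by linarith)]; constructor <;> linarith)
    have h₁ := two_mul_sin_mul_sin a b
    have h₂ := two_mul_sin_mul_sin c (a + b - c)
    rw [add_sub_cancel] at h₂
    linarith
  exact div_le_div_of_nonneg_left (sin_nonneg_of_nonneg_of_le_pi (by linarith) hab)
    (mul_pos hsc hsd) hprod

lemma cot_add_cot_add_cot_add_cot_le {c p q r s : ℝ} {t : ℤ} (hc : 0 < c)
    (hp : p ∈ Set.Icc c (π - 3 * c)) (hq : q ∈ Set.Icc c (π - 3 * c))
    (hr : r ∈ Set.Icc c (π - 3 * c)) (hs : s ∈ Set.Icc c (π - 3 * c))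
    (hsum : p + q + r + s = t * π) :
    cot p + cot q + cot r + cot s ≤ 3 * cot c - cot (3 * c) := by
  obtain ⟨hp, hp'⟩ := hp
  obtain ⟨hq, hq'⟩ := hq
  obtain ⟨hr, hr'⟩ := hr
  obtain ⟨hs, hs'⟩ := hs
  have hpi := pi_pos
  have hc3 : cot (3 * c) ≤ cot c := cot_le_cot hc (by linarith) (by linarith)
  have hc0 : 0 ≤ cot c := cot_nonneg hc (by linarith)
  have ht0 : 0 < t := by
    have : (0 : ℝ) < t := by nlinarith
    exact_mod_cast this
  have ht4 : t < 4 := by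
    have : (t : ℝ) < 4 := by nlinarith
    exact_mod_cast this
  interval_cases t <;> norm_num at hsum
  · have e₁ := cot_add_cot_le_cot_add_cot hc hp hq (by linarith)
    have e₂ := cot_add_cot_le_cot_add_cot (a := p + q - c) hc (by linarith) hr (by linarith)
    have e₃ := cot_add_cot_le_cot_add_cot (a := p + q - c + r - c) hc (by linarith) hs
      (by linarith)
    rw [show p + q - c + r - c + s - c = π - 3 * c by linarith, cot_pi_sub] at e₃
    linarith
  · rcases le_total (p + q) π with h | h
    · have e₁ := cot_add_cot_le_cot_add_cot hc hp hq h
      have e₂ := cot_le_cot (b := p + q - c) hc (by linarith) (by linarith)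
      have e₃ := cot_add_cot_nonpos (a := r) (b := s) (by linarith) (by linarith) (by linarith)
        (by linarith) (by linarith)
      linarith
    · have e₁ := cot_add_cot_le_cot_add_cot hc hr hs (by linarith)
      have e₂ := cot_le_cot (b := r + s - c) hc (by linarith) (by linarith)
      have e₃ := cot_add_cot_nonpos (a := p) (b := q) (by linarith) (by linarith) (by linarith)
        (by linarith) h
      linarith
  · have e₁ := cot_add_cot_nonpos (a := p) (b := q) (by linarith) (by linarith) (by linarith)
      (by linarith) (by linarith)
    have e₂ := cot_add_cot_nonpos (a := r) (b := s) (by linarith) (by linarith) (by linarith)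
      (by linarith) (by linarith)
    linarith

lemma exists_mem_Icc_of_emod_four_eq_one {d : ℕ} (hd : 0 < d) {u : ℤ} (hu : u % 4 = 1) :
    ∃ θ ∈ Set.Icc (π / (4 * d)) (π - 3 * (π / (4 * d))), ∃ m : ℤ,
      π * u / (4 * d) = θ + m * π := by
  have hD : (0 : ℤ) < 4 * d := by omega
  have hr₀ := Int.emod_nonneg u hD.ne'
  have hr₁ := Int.emod_lt_of_pos u hD
  have hr₄ : u % (4 * d) % 4 = 1 := by rw [Int.emod_emod_of_dvd u (dvd_mul_right 4 _), hu]
  have hlo : (1 : ℝ) ≤ (u % (4 * d) : ℤ) := by exact_mod_cast (by omega : 1 ≤ u % (4 * d))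
  have hhi : ((u % (4 * d) : ℤ) : ℝ) ≤ 4 * d - 3 := by
    exact_mod_cast (by omega : u % (4 * d) ≤ 4 * d - 3)
  have hd' : (0 : ℝ) < d := by exact_mod_cast hd
  refine ⟨π * (u % (4 * d) : ℤ) / (4 * d), ⟨?_, ?_⟩, u / (4 * d), ?_⟩
  · rw [div_le_div_iff_of_pos_right (by positivity)]
    nlinarith [pi_pos]
  · rw [show π - 3 * (π / (4 * d)) = π * (4 * d - 3) / (4 * d) by field_simp,
      div_le_div_iff_of_pos_right (by positivity)]
    nlinarith [pi_pos]
  · have hu' : (u : ℝ) = (u % (4 * d) : ℤ) + 4 * d * (u / (4 * d) : ℤ) := by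
      exact_mod_cast (Int.emod_add_mul_ediv u (4 * d)).symm
    rw [hu']
    field_simp

lemma cot_sum_le_of_emod_four_eq_one {d : ℕ} (hd : 0 < d) {u₁ u₂ u₃ u₄ : ℤ}
    (h₁ : u₁ % 4 = 1) (h₂ : u₂ % 4 = 1) (h₃ : u₃ % 4 = 1) (h₄ : u₄ % 4 = 1)
    (hsum : u₁ + u₂ + u₃ + u₄ = 0) :
    cot (π * u₁ / (4 * d)) + cot (π * u₂ / (4 * d)) + cot (π * u₃ / (4 * d)) +
      cot (π * u₄ / (4 * d)) ≤ 3 * cot (π / (4 * d)) - cot (3 * (π / (4 * d))) := by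
  obtain ⟨θ₁, hθ₁, m₁, e₁⟩ := exists_mem_Icc_of_emod_four_eq_one hd h₁
  obtain ⟨θ₂, hθ₂, m₂, e₂⟩ := exists_mem_Icc_of_emod_four_eq_one hd h₂
  obtain ⟨θ₃, hθ₃, m₃, e₃⟩ := exists_mem_Icc_of_emod_four_eq_one hd h₃
  obtain ⟨θ₄, hθ₄, m₄, e₄⟩ := exists_mem_Icc_of_emod_four_eq_one hd h₄
  have hθ : θ₁ + θ₂ + θ₃ + θ₄ = ((-(m₁ + m₂ + m₃ + m₄) : ℤ) : ℝ) * π := by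
    have hsum' : ((u₁ + u₂ + u₃ + u₄ : ℤ) : ℝ) = 0 := by exact_mod_cast hsum
    push_cast at hsum' ⊢
    have : π * u₁ / (4 * d) + π * u₂ / (4 * d) + π * u₃ / (4 * d) + π * u₄ / (4 * d) = 0 := by
      rw [← add_div, ← add_div, ← add_div, ← mul_add, ← mul_add, ← mul_add, hsum', mul_zero,
        zero_div]
    linarith
  rw [e₁, e₂, e₃, e₄, cot_periodic.int_mul, cot_periodic.int_mul, cot_periodic.int_mul,
    cot_periodic.int_mul]
  exact cot_add_cot_add_cot_add_cot_le (by positivity) hθ₁ hθ₂ hθ₃ hθ₄ hθ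

end Real

open scoped Real ComplexConjugate

lemma Complex.cot_mul_exp_sub_one {z : ℂ} (hz : exp (2 * I * z) ≠ 1) :
    cot z * (exp (2 * I * z) - 1) = I * (exp (2 * I * z) + 1) := by
  have hz' : 1 - exp (2 * I * z) ≠ 0 := sub_ne_zero.mpr hz.symm
  rw [cot_eq_exp_ratio]
  field_simp
  linear_combination (exp (2 * I * z) ^ 2 - 1) * I_sq

lemma Complex.exists_eq_int_mul_pi_of_exp_two_mul_I_mul_eq_one {θ : ℝ}
    (h : exp (2 * I * θ) = 1) : ∃ n : ℤ, θ = n * π := by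
  obtain ⟨n, hn⟩ := exp_eq_one_iff.mp h
  refine ⟨n, ofReal_injective ?_⟩
  push_cast
  exact mul_left_cancel₀ (by simp) (hn.trans (by ring) : 2 * I * θ = 2 * I * (n * π))

lemma one_div_sqrt_two_mul_exp_neg_pi_div_four_mul_I :
    1 / (√2 : ℂ) * exp (-(π / 4 * I)) = (1 - I) / 2 := by
  have h := exp_mul_I (-(π / 4 : ℝ))
  rw [Complex.cos_neg, Complex.sin_neg, ← ofReal_cos, ← ofReal_sin, Real.cos_pi_div_four,
    Real.sin_pi_div_four] at h
  push_cast at h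
  rw [← neg_mul, h]
  have h2 : (√2 : ℂ) ^ 2 = 2 := by norm_cast; simp
  have h0 : (√2 : ℂ) ≠ 0 := by norm_cast; positivity
  field_simp
  ring

noncomputable def satwapWeight (d l : ℕ) : ℂ :=
  1 / (√2 : ℂ) * exp (I * π * (2 * (l : ℂ) - d) / (4 * d))

lemma satwapWeight_mul_zpow {d : ℕ} (hd : d ≠ 0) (l : ℕ) (k : ℤ) :
    satwapWeight d l * exp (2 * π * I / d) ^ ((l : ℤ) * k) =
      (1 - I) / 2 * exp (2 * I * (π * (4 * k + 1 : ℤ) / (4 * d) : ℝ)) ^ l := by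
  rw [satwapWeight, ← one_div_sqrt_two_mul_exp_neg_pi_div_four_mul_I]
  simp only [mul_assoc (1 / (√2 : ℂ))]
  rw [← exp_int_mul, ← exp_nat_mul, ← exp_add, ← exp_add]
  congr 2
  push_cast
  field_simp
  ring

lemma sum_satwapWeight_mul_zpow {d : ℕ} (hd : 0 < d) (k : ℤ) :
    ∑ l ∈ Finset.Icc 1 (d - 1), satwapWeight d l * exp (2 * π * I / d) ^ ((l : ℤ) * k) =
      ((Real.cot (π * (4 * k + 1 : ℤ) / (4 * d)) - 1) / 2 : ℝ) := by
  set θ : ℝ := π * (4 * k + 1 : ℤ) / (4 * d)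
  set q := exp (2 * I * θ) with hq_def
  have hd' : (d : ℝ) ≠ 0 := by positivity
  have hdC : (d : ℂ) ≠ 0 := by exact_mod_cast hd'
  have hq : q ≠ 1 := by
    intro h
    obtain ⟨n, hθ⟩ := exists_eq_int_mul_pi_of_exp_two_mul_I_mul_eq_one h
    have h4 : ((4 * k + 1 : ℤ) : ℝ) = ((4 * d * n : ℤ) : ℝ) := by
      simp only [θ] at hθ
      field_simp at hθ
      push_cast at hθ ⊢
      linarith
    have h4' : (4 : ℤ) ∣ 4 * k + 1 := ⟨d * n, by rw [Int.cast_injective h4]; ring⟩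
    omega
  have hqd : q ^ d = I := by
    rw [hq_def, ← exp_nat_mul, show (d : ℂ) * (2 * I * θ) = k * (2 * π * I) + π / 2 * I by
      simp only [θ]; push_cast; field_simp; ring, exp_add, exp_int_mul_two_pi_mul_I, one_mul,
      exp_pi_div_two_mul_I]
  have hcot : cot θ * (q - 1) = I * (q + 1) := cot_mul_exp_sub_one hq
  rw [Finset.sum_congr rfl fun l _ => satwapWeight_mul_zpow hd.ne' l k, ← Finset.mul_sum,
    show Finset.Icc 1 (d - 1) = Finset.Ico 1 d by ext; simp; omega, geom_sum_Ico hq hd, hqd,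
    pow_one]
  push_cast
  have hq' : q - 1 ≠ 0 := sub_ne_zero.mpr hq
  field_simp
  linear_combination -hcot - I_sq

lemma sum_conj_satwapWeight_mul_zpow {d : ℕ} (hd : 0 < d) (k : ℤ) :
    ∑ l ∈ Finset.Icc 1 (d - 1), conj (satwapWeight d l) * exp (2 * π * I / d) ^ ((l : ℤ) * k) =
      ((Real.cot (π * (1 - 4 * k : ℤ) / (4 * d)) - 1) / 2 : ℝ) := by
  have hω : conj (exp (2 * π * I / d)) = (exp (2 * π * I / d))⁻¹ := by
    rw [← exp_conj, ← exp_neg]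
    simp [map_div₀, conj_I, map_ofNat, neg_div]
  have hterm : ∀ l : ℕ, conj (satwapWeight d l) * exp (2 * π * I / d) ^ ((l : ℤ) * k) =
      conj (satwapWeight d l * exp (2 * π * I / d) ^ ((l : ℤ) * -k)) := by
    intro l
    rw [map_mul, map_zpow₀, hω, inv_zpow', mul_neg, neg_neg]
  simp only [hterm, ← map_sum, sum_satwapWeight_mul_zpow hd, conj_ofReal,
    show 4 * -k + 1 = 1 - 4 * k by ring]

/-- The two-setting SATWAP Bell expression, evaluated on any deterministic
local-hidden-variable strategy with integer outcomes `α₁, α₂, β₁, β₂`, is a real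
number bounded by the classical bound
`C_d = (3 cot(π/4d) - cot(3π/4d))/2 - 2`. -/
theorem satwap_classical_bound (d : ℕ) (hd : 2 ≤ d) (α₁ α₂ β₁ β₂ : ℤ) :
    let ω : ℂ := Complex.exp (2 * (Real.pi : ℂ) * Complex.I / d)
    let a : ℕ → ℂ := fun l => (1 / (Real.sqrt 2 : ℂ)) *
      Complex.exp (Complex.I * (Real.pi : ℂ) * (2 * (l : ℂ) - (d : ℂ)) / (4 * d))
    let Itilde : ℂ := ∑ l ∈ Finset.Icc 1 (d - 1),
      (a l * ω ^ ((l : ℤ) * (α₁ - β₁)) +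
       (starRingEnd ℂ) (a l) * ω ^ ((l : ℤ) * (1 + α₁ - β₂)) +
       a l * ω ^ ((l : ℤ) * (α₂ - β₂)) +
       (starRingEnd ℂ) (a l) * ω ^ ((l : ℤ) * (α₂ - β₁)))
    Itilde.im = 0 ∧
    Itilde.re ≤ (3 * Real.cot (Real.pi / (4 * d)) -
      Real.cot (3 * Real.pi / (4 * d))) / 2 - 2 := by
  intro ω a Itilde
  have hd₀ : 0 < d := by omega
  set G : ℤ → ℝ := fun u => (Real.cot (π * u / (4 * d)) - 1) / 2
  have h₁ : ∑ l ∈ Finset.Icc 1 (d - 1), a l * ω ^ ((l : ℤ) * (α₁ - β₁)) =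
      G (4 * (α₁ - β₁) + 1) := sum_satwapWeight_mul_zpow hd₀ _
  have h₂ : ∑ l ∈ Finset.Icc 1 (d - 1), conj (a l) * ω ^ ((l : ℤ) * (1 + α₁ - β₂)) =
      G (1 - 4 * (1 + α₁ - β₂)) := sum_conj_satwapWeight_mul_zpow hd₀ _
  have h₃ : ∑ l ∈ Finset.Icc 1 (d - 1), a l * ω ^ ((l : ℤ) * (α₂ - β₂)) =
      G (4 * (α₂ - β₂) + 1) := sum_satwapWeight_mul_zpow hd₀ _
  have h₄ : ∑ l ∈ Finset.Icc 1 (d - 1), conj (a l) * ω ^ ((l : ℤ) * (α₂ - β₁)) =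
      G (1 - 4 * (α₂ - β₁)) := sum_conj_satwapWeight_mul_zpow hd₀ _
  have hI : Itilde = ((G (4 * (α₁ - β₁) + 1) + G (1 - 4 * (1 + α₁ - β₂)) +
      G (4 * (α₂ - β₂) + 1) + G (1 - 4 * (α₂ - β₁)) : ℝ) : ℂ) := by
    simp only [Itilde, Finset.sum_add_distrib, h₁, h₂, h₃, h₄, ofReal_add]
  refine ⟨by rw [hI, ofReal_im], ?_⟩
  have hcot := Real.cot_sum_le_of_emod_four_eq_one hd₀ (u₁ := 4 * (α₁ - β₁) + 1)
    (u₂ := 1 - 4 * (1 + α₁ - β₂)) (u₃ := 4 * (α₂ - β₂) + 1) (u₄ := 1 - 4 * (α₂ - β₁))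
    (by omega) (by omega) (by omega) (by omega) (by ring)
  rw [hI, ofReal_re, mul_div_assoc]
  simp only [G]
  linarith
end

section
/- Fix an integer $d \geq 2$, let $\omega = e^{2\pi i/d}$ and $a_l = \tfrac{1}{\sqrt{2}}\, e^{i\pi(2l-d)/(4d)}$ for $l = 1, \dots, d-1$. Let $H_A$ and $H_B$ be finite-dimensional complex Hilbert spaces, let $A_1, A_2$ be unitary operators on $H_A$ and $B_1, B_2$ unitary operators on $H_B$ with $A_x^d = I$ and $B_y^d = I$, and let $\psi \in H_A \otimes H_B$ be a unit vector. Define $\tilde{I}_d := \sum_{l=1}^{d-1} \big[ a_l \langle \psi, (A_1^l \otimes B_1^{d-l})\psi \rangle + \overline{a_l}\, \omega^l \langle \psi, (A_1^l \otimes B_2^{d-l})\psi \rangle + a_l \langle \psi, (A_2^l \otimes B_2^{d-l})\psi \rangle + \overline{a_l} \langle \psi, (A_2^l \otimes B_1^{d-l})\psi \rangle \big]$. Then $\tilde{I}_d$ is real and $\tilde{I}_d \leq 2(d-1)$ (the Tsirelson bound of the SATWAP inequality). -/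
/-!
Conjugating the `l`-th summand of `Ĩ_d` gives the `(d - l)`-th one, because `conj a_l = a_{d-l}`,
`conj ω^l = ω^{d-l}` and `(A^l)^* = A^{d-l}` for a unitary `A` with `A^d = 1`; so `Ĩ_d` is real.
The `l`-th summand equals `⟨ψ, (C ⊗ B₁^{d-l}) ψ⟩ + ⟨ψ, (D ⊗ B₂^{d-l}) ψ⟩` with
`C = a_l A₁^l + ā_l A₂^l` and `D = ā_l ω^l A₁^l + a_l A₂^l`, and the phase of `a_l` is exactly what
makes `ā_l² ω^l = -a_l²`, hence `C C^* + D D^* = 2`. For a unitary `U`,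
`Re ⟨ψ, (C ⊗ U) ψ⟩ = Re ⟨(C^* ⊗ 1) ψ, (1 ⊗ U) ψ⟩ ≤ (‖(C^* ⊗ 1) ψ‖² + 1) / 2`, so each summand has
real part at most `(2 + 2) / 2 = 2`, and there are `d - 1` summands.
-/

open Kronecker Matrix ComplexConjugate Complex Finset
open scoped ComplexOrder

lemma star_pow_eq_pow_sub {R : Type*} [Monoid R] [StarMul R] {U : R} (hU : U ∈ unitary R)
    {d : ℕ} (hUd : U ^ d = 1) {l : ℕ} (hl : l ≤ d) : star (U ^ l) = U ^ (d - l) :=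
  calc star (U ^ l) = star (U ^ l) * (U ^ l * U ^ (d - l)) := by
        rw [← pow_add, Nat.add_sub_cancel' hl, hUd, mul_one]
    _ = U ^ (d - l) := by rw [← mul_assoc, Unitary.star_mul_self_of_mem (pow_mem hU l), one_mul]

lemma Complex.mem_unitary_of_pow_eq_one {ζ : ℂ} {d : ℕ} (h : ζ ^ d = 1) (hd : d ≠ 0) :
    ζ ∈ unitary ℂ := by
  rw [Unitary.mem_iff_star_mul_self, star_def, conj_mul', norm_eq_one_of_pow_eq_one h hd]
  norm_num

lemma Finset.sum_Icc_one_reflect {M : Type*} [AddCommMonoid M] (f : ℕ → M) (d : ℕ) :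
    ∑ l ∈ Icc 1 (d - 1), f (d - l) = ∑ l ∈ Icc 1 (d - 1), f l := by
  refine sum_nbij' (d - ·) (d - ·) ?_ ?_ ?_ ?_ (fun _ _ => rfl) <;>
    intro l hl <;> simp only [mem_Icc] at hl ⊢ <;> omega

lemma re_star_dotProduct_le {ι : Type*} [Fintype ι] (u v : ι → ℂ) :
    (star u ⬝ᵥ v).re ≤ ((star u ⬝ᵥ u).re + (star v ⬝ᵥ v).re) / 2 := by
  have hsq : 0 ≤ (star (u - v) ⬝ᵥ (u - v)).re := (nonneg_iff.mp (dotProduct_star_self_nonneg _)).1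
  have hswap : star v ⬝ᵥ u = conj (star u ⬝ᵥ v) := star_dotProduct v u
  simp only [star_sub, sub_dotProduct, dotProduct_sub, hswap, sub_re, conj_re] at hsq
  linarith

lemma star_dotProduct_self_eq_sum_norm_sq {ι : Type*} [Fintype ι] (ψ : ι → ℂ) :
    star ψ ⬝ᵥ ψ = ((∑ i, ‖ψ i‖ ^ 2 : ℝ) : ℂ) := by
  simp [dotProduct, conj_mul']

lemma star_mulVec_dotProduct_mulVec {n R : Type*} [Fintype n] [CommSemiring R] [StarRing R]
    (v : n → R) (M N : Matrix n n R) :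
    star (M *ᵥ v) ⬝ᵥ (N *ᵥ v) = star v ⬝ᵥ ((Mᴴ * N) *ᵥ v) := by
  rw [star_mulVec, ← dotProduct_mulVec, mulVec_mulVec]

section Correlator

variable {ι κ : Type*} [Fintype ι] [Fintype κ] (ψ : ι × κ → ℂ)

def correlator (P : Matrix ι ι ℂ) (Q : Matrix κ κ ℂ) : ℂ := star ψ ⬝ᵥ ((P ⊗ₖ Q) *ᵥ ψ)

lemma correlator_add_left (P P' : Matrix ι ι ℂ) (Q : Matrix κ κ ℂ) :
    correlator ψ (P + P') Q = correlator ψ P Q + correlator ψ P' Q := by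
  simp only [correlator, add_kronecker, add_mulVec, dotProduct_add]

lemma correlator_smul_left (c : ℂ) (P : Matrix ι ι ℂ) (Q : Matrix κ κ ℂ) :
    correlator ψ (c • P) Q = c * correlator ψ P Q := by
  simp only [correlator, smul_kronecker, smul_mulVec, dotProduct_smul, smul_eq_mul]

lemma conj_correlator (P : Matrix ι ι ℂ) (Q : Matrix κ κ ℂ) :
    conj (correlator ψ P Q) = correlator ψ Pᴴ Qᴴ := by
  rw [correlator, correlator, ← conjTranspose_kronecker, ← star_def, star_dotProduct, star_star,
    star_mulVec, ← dotProduct_mulVec]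

lemma re_correlator_le [DecidableEq ι] [DecidableEq κ] {U : Matrix κ κ ℂ} (hU : Uᴴ * U = 1)
    (C : Matrix ι ι ℂ) :
    (correlator ψ C U).re ≤ ((correlator ψ (C * Cᴴ) 1).re + (star ψ ⬝ᵥ ψ).re) / 2 := by
  have key := re_star_dotProduct_le ((Cᴴ ⊗ₖ 1) *ᵥ ψ) ((1 ⊗ₖ U) *ᵥ ψ)
  simp only [star_mulVec_dotProduct_mulVec, conjTranspose_kronecker, conjTranspose_conjTranspose,
    conjTranspose_one, ← mul_kronecker_mul, mul_one, one_mul, hU, one_kronecker_one,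
    one_mulVec] at key
  exact key

lemma re_correlator_add_le_two [DecidableEq ι] [DecidableEq κ] {C D : Matrix ι ι ℂ}
    {U V : Matrix κ κ ℂ} (hU : Uᴴ * U = 1) (hV : Vᴴ * V = 1) (hCD : C * Cᴴ + D * Dᴴ = (2 : ℂ) • 1)
    (hψ : star ψ ⬝ᵥ ψ = 1) :
    (correlator ψ C U + correlator ψ D V).re ≤ 2 := by
  have hsum : correlator ψ (C * Cᴴ) 1 + correlator ψ (D * Dᴴ) 1 = 2 := by
    rw [← correlator_add_left, hCD, correlator_smul_left, correlator, one_kronecker_one,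
      one_mulVec, hψ, mul_one]
  have hsum_re := congrArg re hsum
  rw [add_re, re_ofNat] at hsum_re
  rw [add_re]
  linarith [re_correlator_le ψ hU C, re_correlator_le ψ hV D, congrArg re hψ, one_re]

end Correlator

section Coefficients

open scoped Real

noncomputable def satwapOmega (d : ℕ) : ℂ := exp (2 * (π : ℂ) * I / d)

noncomputable def satwapCoeff (d l : ℕ) : ℂ :=
  (1 / (√2 : ℂ)) * exp (I * (π : ℂ) * (2 * (l : ℂ) - (d : ℂ)) / (4 * d))

lemma satwapOmega_pow_self {d : ℕ} (hd : d ≠ 0) : satwapOmega d ^ d = 1 :=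
  (isPrimitiveRoot_exp d hd).pow_eq_one

lemma satwapOmega_mem_unitary {d : ℕ} (hd : d ≠ 0) : satwapOmega d ∈ unitary ℂ :=
  mem_unitary_of_pow_eq_one (satwapOmega_pow_self hd) hd

lemma conj_satwapCoeff (d l : ℕ) : conj (satwapCoeff d l) =
    (1 / (√2 : ℂ)) * exp (-(I * (π : ℂ) * (2 * (l : ℂ) - (d : ℂ)) / (4 * d))) := by
  rw [satwapCoeff, map_mul, ← exp_conj]
  congr 2
  · simp
  · simp only [map_div₀, map_mul, map_sub, conj_I, conj_ofReal, map_ofNat, map_natCast]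
    ring

lemma conj_satwapCoeff_of_le {d l : ℕ} (hl : l ≤ d) :
    conj (satwapCoeff d l) = satwapCoeff d (d - l) := by
  rw [conj_satwapCoeff, satwapCoeff, Nat.cast_sub hl]
  ring_nf

lemma one_div_sqrt_two_mul_self : (1 / (√2 : ℂ)) * (1 / (√2 : ℂ)) = 1 / 2 := by
  rw [div_mul_div_comm, one_mul, ← ofReal_mul, Real.mul_self_sqrt zero_le_two, ofReal_ofNat]

lemma satwapCoeff_mul_conj (d l : ℕ) : satwapCoeff d l * conj (satwapCoeff d l) = 1 / 2 := by
  rw [conj_satwapCoeff, satwapCoeff, mul_mul_mul_comm, ← exp_add, add_neg_cancel, exp_zero,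
    mul_one, one_div_sqrt_two_mul_self]

lemma satwapCoeff_sq_add_conj_sq_mul_satwapOmega_pow {d : ℕ} (hd : d ≠ 0) (l : ℕ) :
    satwapCoeff d l ^ 2 + conj (satwapCoeff d l) ^ 2 * satwapOmega d ^ l = 0 := by
  set z : ℂ := I * (π : ℂ) * (2 * (l : ℂ) - (d : ℂ)) / (4 * d) with hz
  have hphase : -z + -z + l * (2 * (π : ℂ) * I / d) = (z + z) + π * I := by
    rw [hz]; field_simp; ring
  rw [conj_satwapCoeff, satwapCoeff, satwapOmega, ← exp_nat_mul, ← hz]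
  calc (1 / (√2 : ℂ) * exp z) ^ 2 + (1 / (√2 : ℂ) * exp (-z)) ^ 2 * exp (l * (2 * π * I / d))
      = 1 / 2 * (exp (z + z) + exp (-z + -z + l * (2 * (π : ℂ) * I / d))) := by
        simp only [exp_add, ← one_div_sqrt_two_mul_self]; ring
    _ = 0 := by rw [hphase, exp_add (z + z), exp_pi_mul_I]; ring

end Coefficients

lemma unitary_combination_mul_star_add_eq_two {R : Type*} [Ring R] [StarRing R] [Algebra ℂ R]
    [StarModule ℂ R] {X Y : R} (hX : X ∈ unitary R) (hY : Y ∈ unitary R) {a w : ℂ}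
    (hw : w ∈ unitary ℂ) (ha : a * conj a = 1 / 2) (haw : a ^ 2 + conj a ^ 2 * w = 0) :
    (a • X + conj a • Y) * star (a • X + conj a • Y) +
      ((conj a * w) • X + a • Y) * star ((conj a * w) • X + a • Y) = (2 : ℂ) • 1 := by
  have hw' : w * conj w = 1 := Unitary.mul_star_self_of_mem hw
  have haw' : conj a ^ 2 + a ^ 2 * conj w = 0 := by
    simpa using congrArg conj haw
  simp only [star_add, star_smul, add_mul, mul_add, smul_mul_smul, Unitary.mul_star_self_of_mem hX,
    Unitary.mul_star_self_of_mem hY, Complex.star_def, map_mul, conj_conj]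
  match_scalars
  · linear_combination (4 : ℂ) * ha + (a * conj a) * hw'
  · linear_combination haw'
  · linear_combination haw

section SatwapTerm

variable {ι κ : Type*} [Fintype ι] [Fintype κ] [DecidableEq ι] [DecidableEq κ]
  (d : ℕ) (A₁ A₂ : Matrix ι ι ℂ) (B₁ B₂ : Matrix κ κ ℂ) (ψ : ι × κ → ℂ)

noncomputable def satwapTerm (l : ℕ) : ℂ :=
  satwapCoeff d l * correlator ψ (A₁ ^ l) (B₁ ^ (d - l)) +
    conj (satwapCoeff d l) * satwapOmega d ^ l * correlator ψ (A₁ ^ l) (B₂ ^ (d - l)) +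
    satwapCoeff d l * correlator ψ (A₂ ^ l) (B₂ ^ (d - l)) +
    conj (satwapCoeff d l) * correlator ψ (A₂ ^ l) (B₁ ^ (d - l))

variable {d A₁ A₂ B₁ B₂}

lemma conj_satwapTerm (hd : d ≠ 0)
    (hA₁ : A₁ ∈ unitaryGroup ι ℂ) (hA₂ : A₂ ∈ unitaryGroup ι ℂ)
    (hB₁ : B₁ ∈ unitaryGroup κ ℂ) (hB₂ : B₂ ∈ unitaryGroup κ ℂ)
    (hA₁d : A₁ ^ d = 1) (hA₂d : A₂ ^ d = 1) (hB₁d : B₁ ^ d = 1) (hB₂d : B₂ ^ d = 1)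
    {l : ℕ} (hl : l ≤ d) :
    conj (satwapTerm d A₁ A₂ B₁ B₂ ψ l) = satwapTerm d A₁ A₂ B₁ B₂ ψ (d - l) := by
  have hl' : d - l ≤ d := Nat.sub_le d l
  have hω := satwapOmega_mem_unitary hd
  have hωd := satwapOmega_pow_self hd
  simp only [satwapTerm, map_add, map_mul, conj_correlator, ← star_eq_conjTranspose,
    ← Complex.star_def, star_pow_eq_pow_sub hA₁ hA₁d hl, star_pow_eq_pow_sub hA₂ hA₂d hl,
    star_pow_eq_pow_sub hB₁ hB₁d hl', star_pow_eq_pow_sub hB₂ hB₂d hl',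
    star_pow_eq_pow_sub hω hωd hl, conj_satwapCoeff_of_le hl]

lemma re_satwapTerm_le_two (hd : d ≠ 0)
    (hA₁ : A₁ ∈ unitaryGroup ι ℂ) (hA₂ : A₂ ∈ unitaryGroup ι ℂ)
    (hB₁ : B₁ ∈ unitaryGroup κ ℂ) (hB₂ : B₂ ∈ unitaryGroup κ ℂ)
    (hψ : star ψ ⬝ᵥ ψ = 1) (l : ℕ) :
    (satwapTerm d A₁ A₂ B₁ B₂ ψ l).re ≤ 2 := by
  set a := satwapCoeff d l
  set C := a • A₁ ^ l + conj a • A₂ ^ l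
  set D := (conj a * satwapOmega d ^ l) • A₁ ^ l + a • A₂ ^ l
  have hsplit : satwapTerm d A₁ A₂ B₁ B₂ ψ l =
      correlator ψ C (B₁ ^ (d - l)) + correlator ψ D (B₂ ^ (d - l)) := by
    simp only [satwapTerm, C, D, correlator_add_left, correlator_smul_left]
    ring
  have hCD : C * Cᴴ + D * Dᴴ = (2 : ℂ) • 1 :=
    unitary_combination_mul_star_add_eq_two (pow_mem hA₁ l) (pow_mem hA₂ l)
      (pow_mem (satwapOmega_mem_unitary hd) l) (satwapCoeff_mul_conj d l)
      (satwapCoeff_sq_add_conj_sq_mul_satwapOmega_pow hd l)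
  rw [hsplit]
  exact re_correlator_add_le_two ψ (Unitary.star_mul_self_of_mem (pow_mem hB₁ _))
    (Unitary.star_mul_self_of_mem (pow_mem hB₂ _)) hCD hψ

end SatwapTerm

/-- Tsirelson bound of the two-setting SATWAP Bell inequality: for any unitary
observables `A₁, A₂` on a finite-dimensional Hilbert space `ℂⁿ` and `B₁, B₂` on `ℂᵐ`
with `Aₓᵈ = I`, `B_yᵈ = I`, and any unit vector `ψ ∈ ℂⁿ ⊗ ℂᵐ`, the SATWAP expression
`Ĩ_d` is real and satisfies `Ĩ_d ≤ 2(d-1)`. -/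
theorem satwap_tsirelson_bound (d n m : ℕ) (hd : 2 ≤ d)
    (A₁ A₂ : Matrix (Fin n) (Fin n) ℂ) (B₁ B₂ : Matrix (Fin m) (Fin m) ℂ)
    (hA₁ : A₁ ∈ Matrix.unitaryGroup (Fin n) ℂ)
    (hA₂ : A₂ ∈ Matrix.unitaryGroup (Fin n) ℂ)
    (hB₁ : B₁ ∈ Matrix.unitaryGroup (Fin m) ℂ)
    (hB₂ : B₂ ∈ Matrix.unitaryGroup (Fin m) ℂ)
    (hA₁d : A₁ ^ d = 1) (hA₂d : A₂ ^ d = 1) (hB₁d : B₁ ^ d = 1) (hB₂d : B₂ ^ d = 1)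
    (ψ : Fin n × Fin m → ℂ) (hψ : ∑ i, ‖ψ i‖ ^ 2 = 1) :
    let ω : ℂ := Complex.exp (2 * (Real.pi : ℂ) * Complex.I / d)
    let a : ℕ → ℂ := fun l => (1 / (Real.sqrt 2 : ℂ)) *
      Complex.exp (Complex.I * (Real.pi : ℂ) * (2 * (l : ℂ) - (d : ℂ)) / (4 * d))
    let corr : Matrix (Fin n) (Fin n) ℂ → Matrix (Fin m) (Fin m) ℂ → ℂ :=
      fun P Q => star ψ ⬝ᵥ ((P ⊗ₖ Q) *ᵥ ψ)
    let Itilde : ℂ := ∑ l ∈ Finset.Icc 1 (d - 1),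
      (a l * corr (A₁ ^ l) (B₁ ^ (d - l)) +
       (starRingEnd ℂ) (a l) * ω ^ l * corr (A₁ ^ l) (B₂ ^ (d - l)) +
       a l * corr (A₂ ^ l) (B₂ ^ (d - l)) +
       (starRingEnd ℂ) (a l) * corr (A₂ ^ l) (B₁ ^ (d - l)))
    Itilde.im = 0 ∧ Itilde.re ≤ 2 * ((d : ℝ) - 1) := by
  intro ω a corr Itilde
  have hd0 : d ≠ 0 := by omega
  have hψ1 : star ψ ⬝ᵥ ψ = 1 := by rw [star_dotProduct_self_eq_sum_norm_sq, hψ, ofReal_one]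
  change (∑ l ∈ Icc 1 (d - 1), satwapTerm d A₁ A₂ B₁ B₂ ψ l).im = 0 ∧
    (∑ l ∈ Icc 1 (d - 1), satwapTerm d A₁ A₂ B₁ B₂ ψ l).re ≤ 2 * ((d : ℝ) - 1)
  constructor
  · rw [← conj_eq_iff_im, map_sum]
    calc ∑ l ∈ Icc 1 (d - 1), conj (satwapTerm d A₁ A₂ B₁ B₂ ψ l)
        = ∑ l ∈ Icc 1 (d - 1), satwapTerm d A₁ A₂ B₁ B₂ ψ (d - l) :=
          sum_congr rfl fun l hl => conj_satwapTerm ψ hd0 hA₁ hA₂ hB₁ hB₂ hA₁d hA₂d hB₁d hB₂d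
            ((mem_Icc.mp hl).2.trans (Nat.sub_le d 1))
      _ = ∑ l ∈ Icc 1 (d - 1), satwapTerm d A₁ A₂ B₁ B₂ ψ l := sum_Icc_one_reflect _ d
  · calc (∑ l ∈ Icc 1 (d - 1), satwapTerm d A₁ A₂ B₁ B₂ ψ l).re
        = ∑ l ∈ Icc 1 (d - 1), (satwapTerm d A₁ A₂ B₁ B₂ ψ l).re := re_sum _ _
      _ ≤ #(Icc 1 (d - 1)) • 2 :=
        sum_le_card_nsmul _ _ _ fun l _ => re_satwapTerm_le_two ψ hd0 hA₁ hA₂ hB₁ hB₂ hψ1 l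
      _ = 2 * ((d : ℝ) - 1) := by
        rw [Nat.card_Icc, Nat.add_sub_cancel, nsmul_eq_mul, Nat.cast_sub (by omega : 1 ≤ d),
          Nat.cast_one, mul_comm]
end

section
/- Fix an integer $d \geq 2$ and let $\omega = e^{2\pi i/d}$, $a_l = \tfrac{1}{\sqrt{2}}\, e^{i\pi(2l-d)/(4d)}$. Let $F = \tfrac{1}{\sqrt{d}} \sum_{i,j=0}^{d-1} \omega^{ij} |i\rangle\langle j|$ be the Fourier matrix, $\Omega = \mathrm{diag}(1, \omega, \dots, \omega^{d-1})$, and define the unitaries $U_x = \sum_{j=0}^{d-1} e^{2\pi i j \theta_x/d} |j\rangle\langle j|$ and $V_y = \sum_{j=0}^{d-1} e^{2\pi i j \zeta_y/d} |j\rangle\langle j|$ with $\theta_1 = 1/4$, $\theta_2 = 3/4$, $\zeta_1 = 1/2$, $\zeta_2 = 1$. Set $A_x = U_x^{\dagger} F \Omega F^{\dagger} U_x$ and $B_y = V_y F^{\dagger} \Omega F V_y^{\dagger}$, and let $\psi_d^+ = \tfrac{1}{\sqrt{d}} \sum_{k=0}^{d-1} |k\rangle \otimes |k\rangle \in \mathbb{C}^d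 \otimes \mathbb{C}^d$. Then $\tilde{I}_d := \sum_{l=1}^{d-1} \big[ a_l \langle \psi_d^+, (A_1^l \otimes B_1^{d-l})\psi_d^+ \rangle + \overline{a_l}\, \omega^l \langle \psi_d^+, (A_1^l \otimes B_2^{d-l})\psi_d^+ \rangle + a_l \langle \psi_d^+, (A_2^l \otimes B_2^{d-l})\psi_d^+ \rangle + \overline{a_l} \langle \psi_d^+, (A_2^l \otimes B_1^{d-l})\psi_d^+ \rangle \big] = 2(d-1)$, i.e. the maximally entangled state with these measurements attains the Tsirelson bound of the SATWAP inequality. -/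
open Kronecker Matrix
open Complex

namespace SatwapProofAux

lemma exp_mul_exp (p q r : ℂ) (h : p + q = r) :
    Complex.exp p * Complex.exp q = Complex.exp r := by
  rw [← Complex.exp_add, h]

lemma exp_eq_of_sub_two_pi (p r : ℂ) (h : p = r + 2 * Real.pi * I) :
    Complex.exp p = Complex.exp r := by
  rw [h, Complex.exp_add, Complex.exp_two_pi_mul_I, mul_one]

lemma conj_pow {n : ℕ} (G M : Matrix (Fin n) (Fin n) ℂ) (h : G * Gᴴ = 1) (l : ℕ) :
    (Gᴴ * M * G) ^ l = Gᴴ * M ^ l * G := by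
  have h' : Gᴴ * G = 1 := mul_eq_one_comm.mp h
  induction l with
  | zero => simp [Matrix.mul_one, h']
  | succ k ih =>
      rw [pow_succ, ih, pow_succ]
      calc Gᴴ * M ^ k * G * (Gᴴ * M * G)
          = Gᴴ * M ^ k * (G * Gᴴ) * M * G := by
            simp only [Matrix.mul_assoc]
        _ = Gᴴ * (M ^ k * M) * G := by rw [h]; simp only [Matrix.mul_assoc, Matrix.mul_one]
        _ = Gᴴ * (M ^ (k+1)) * G := by rw [pow_succ]

lemma geom (d : ℕ) (hd : d ≠ 0) (t : ℤ) :
    ∑ k : Fin d, (Complex.exp (2 * Real.pi * I / d) ^ t) ^ (k : ℕ)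
      = if (d : ℤ) ∣ t then (d : ℂ) else 0 := by
  set ω := Complex.exp (2 * Real.pi * I / d) with hω
  have hprim : IsPrimitiveRoot ω d := Complex.isPrimitiveRoot_exp d hd
  by_cases hdvd : (d : ℤ) ∣ t
  · rw [if_pos hdvd]
    rw [(hprim.zpow_eq_one_iff_dvd t).mpr hdvd]
    simp
  · rw [if_neg hdvd]
    have hne : ω ^ t ≠ 1 := fun h => hdvd ((hprim.zpow_eq_one_iff_dvd t).mp h)
    rw [Fin.sum_univ_eq_sum_range (fun k => (ω ^ t) ^ k) d, geom_sum_eq hne]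
    have : (ω ^ t) ^ d = 1 := by
      rw [← zpow_natCast (ω ^ t) d, ← _root_.zpow_mul, mul_comm, _root_.zpow_mul, zpow_natCast,
        hprim.pow_eq_one, _root_.one_zpow]
    rw [this]
    simp

lemma dvd_iff_mod (d l : ℕ) (i j : Fin d) :
    (d:ℤ) ∣ ((i:ℤ) + l - j) ↔ ((i:ℕ) + l) % d = (j:ℕ) := by
  rw [show ((i:ℤ) + l - j) = -(((j:ℕ):ℤ) - (((i:ℕ) + l : ℕ) : ℤ)) by push_cast; ring,
    dvd_neg, ← Nat.modEq_iff_dvd]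
  unfold Nat.ModEq
  rw [Nat.mod_eq_of_lt j.isLt]

lemma pow_combine (ω : ℂ) (hω0 : ω ≠ 0) (i j l k : ℕ) :
    ω ^ (i*k) * (ω ^ k) ^ l * (ω⁻¹) ^ (j*k) = (ω ^ ((i:ℤ) + l - j)) ^ (k:ℕ) := by
  rw [← pow_mul, inv_pow, ← zpow_natCast ω (i*k), ← zpow_natCast ω (k*l),
    ← zpow_natCast ω (j*k), ← _root_.zpow_neg, ← _root_.zpow_add₀ hω0, ← _root_.zpow_add₀ hω0,
    ← _root_.zpow_natCast (ω ^ ((i:ℤ) + l - j)) (k:ℕ), ← _root_.zpow_mul]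
  congr 1
  push_cast
  ring

lemma shift1 (d : ℕ) (hd : 2 ≤ d) (ω : ℂ) (hω : ω = Complex.exp (2 * Real.pi * I / d)) (l : ℕ) :
    (Matrix.of fun i j : Fin d => ω ^ (i.val * j.val) / (Real.sqrt d : ℂ)) *
      (Matrix.diagonal fun j : Fin d => ω ^ j.val) ^ l *
      (Matrix.of fun i j : Fin d => ω ^ (i.val * j.val) / (Real.sqrt d : ℂ))ᴴ
    = Matrix.of fun i j : Fin d => if ((i:ℕ) + l) % d = (j:ℕ) then (1:ℂ) else 0 := by
  have hd0 : (d:ℕ) ≠ 0 := by omega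
  have hd0' : (d:ℂ) ≠ 0 := Nat.cast_ne_zero.mpr hd0
  have hω0 : ω ≠ 0 := hω ▸ Complex.exp_ne_zero _
  have hsω : star ω = ω⁻¹ := by
    rw [hω, Complex.star_def, ← Complex.exp_conj, ← Complex.exp_neg]
    congr 1
    simp only [map_div₀, _root_.map_mul, Complex.conj_I, Complex.conj_ofReal, map_ofNat,
      Complex.conj_natCast]
    ring
  have hsd : (Real.sqrt d : ℂ) * (Real.sqrt d : ℂ) = (d:ℂ) := by
    rw [← Complex.ofReal_mul, Real.mul_self_sqrt (Nat.cast_nonneg d)]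
    norm_cast
  ext i j
  rw [Matrix.mul_apply]
  have hterm : ∀ k : Fin d,
      ((Matrix.of fun i j : Fin d => ω ^ (i.val * j.val) / (Real.sqrt d : ℂ)) *
        (Matrix.diagonal fun j : Fin d => ω ^ j.val) ^ l) i k *
      ((Matrix.of fun i j : Fin d => ω ^ (i.val * j.val) / (Real.sqrt d : ℂ))ᴴ k j)
      = (ω ^ ((i:ℤ) + l - j)) ^ (k:ℕ) / d := by
    intro k
    rw [Matrix.diagonal_pow, Matrix.mul_diagonal, Matrix.conjTranspose_apply]
    simp only [Matrix.of_apply, Pi.pow_apply]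
    rw [star_div₀, star_pow, hsω, Complex.star_def, Complex.conj_ofReal]
    rw [div_mul_eq_mul_div, div_mul_div_comm, hsd, pow_combine ω hω0]
  rw [Finset.sum_congr rfl (fun k _ => hterm k), ← Finset.sum_div, hω,
    geom d hd0 ((i:ℤ) + l - j)]
  by_cases hc : ((i:ℕ) + l) % d = (j:ℕ)
  · rw [if_pos ((dvd_iff_mod d l i j).mpr hc), Matrix.of_apply, if_pos hc, div_self hd0']
  · rw [if_neg (fun h => hc ((dvd_iff_mod d l i j).mp h)), Matrix.of_apply, if_neg hc, zero_div]

lemma shift2 (d : ℕ) (hd : 2 ≤ d) (ω : ℂ) (hω : ω = Complex.exp (2 * Real.pi * I / d)) (m : ℕ) :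
    (Matrix.of fun i j : Fin d => ω ^ (i.val * j.val) / (Real.sqrt d : ℂ))ᴴ *
      (Matrix.diagonal fun j : Fin d => ω ^ j.val) ^ m *
      (Matrix.of fun i j : Fin d => ω ^ (i.val * j.val) / (Real.sqrt d : ℂ))
    = Matrix.of fun i j : Fin d => if ((j:ℕ) + m) % d = (i:ℕ) then (1:ℂ) else 0 := by
  have hd0 : (d:ℕ) ≠ 0 := by omega
  have hd0' : (d:ℂ) ≠ 0 := Nat.cast_ne_zero.mpr hd0
  have hω0 : ω ≠ 0 := hω ▸ Complex.exp_ne_zero _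
  have hsω : star ω = ω⁻¹ := by
    rw [hω, Complex.star_def, ← Complex.exp_conj, ← Complex.exp_neg]
    congr 1
    simp only [map_div₀, _root_.map_mul, Complex.conj_I, Complex.conj_ofReal, map_ofNat,
      Complex.conj_natCast]
    ring
  have hsd : (Real.sqrt d : ℂ) * (Real.sqrt d : ℂ) = (d:ℂ) := by
    rw [← Complex.ofReal_mul, Real.mul_self_sqrt (Nat.cast_nonneg d)]
    norm_cast
  ext i j
  rw [Matrix.mul_apply]
  have hterm : ∀ k : Fin d,
      ((Matrix.of fun i j : Fin d => ω ^ (i.val * j.val) / (Real.sqrt d : ℂ))ᴴ *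
        (Matrix.diagonal fun j : Fin d => ω ^ j.val) ^ m) i k *
      ((Matrix.of fun i j : Fin d => ω ^ (i.val * j.val) / (Real.sqrt d : ℂ)) k j)
      = (ω ^ ((j:ℤ) + m - i)) ^ (k:ℕ) / d := by
    intro k
    rw [Matrix.diagonal_pow, Matrix.mul_diagonal, Matrix.conjTranspose_apply]
    simp only [Matrix.of_apply, Pi.pow_apply]
    rw [star_div₀, star_pow, hsω, Complex.star_def, Complex.conj_ofReal]
    rw [div_mul_eq_mul_div, div_mul_div_comm, hsd]
    rw [show (ω⁻¹) ^ (k.val * i.val) * (ω ^ k.val) ^ m * ω ^ (k.val * j.val)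
        = ω ^ (j.val * k.val) * (ω ^ k.val) ^ m * (ω⁻¹) ^ (i.val * k.val) by ring_nf,
      pow_combine ω hω0]
  rw [Finset.sum_congr rfl (fun k _ => hterm k), ← Finset.sum_div, hω,
    geom d hd0 ((j:ℤ) + m - i)]
  by_cases hc : ((j:ℕ) + m) % d = (i:ℕ)
  · rw [if_pos ((dvd_iff_mod d m j i).mpr hc), Matrix.of_apply, if_pos hc, div_self hd0']
  · rw [if_neg (fun h => hc ((dvd_iff_mod d m j i).mp h)), Matrix.of_apply, if_neg hc, zero_div]

lemma corr_eq (d : ℕ) (hd : 2 ≤ d) (P Q : Matrix (Fin d) (Fin d) ℂ) :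
    star (fun kk : Fin d × Fin d => if kk.1 = kk.2 then 1 / (Real.sqrt d : ℂ) else 0) ⬝ᵥ
      ((P ⊗ₖ Q) *ᵥ (fun kk : Fin d × Fin d => if kk.1 = kk.2 then 1 / (Real.sqrt d : ℂ) else 0))
    = (∑ i : Fin d, ∑ j : Fin d, P i j * Q i j) / d := by
  classical
  have hsd : (Real.sqrt d : ℂ) * (Real.sqrt d : ℂ) = (d:ℂ) := by
    rw [← Complex.ofReal_mul, Real.mul_self_sqrt (Nat.cast_nonneg d)]
    norm_cast
  simp only [dotProduct, Matrix.mulVec, Pi.star_apply, apply_ite (star : ℂ → ℂ), star_zero,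
    star_div₀, star_one, Complex.star_def, Complex.conj_ofReal,
    Matrix.kroneckerMap_apply, Fintype.sum_prod_type, mul_ite, mul_zero, mul_one,
    ite_mul, zero_mul, Finset.sum_ite_eq, Finset.sum_ite_eq', Finset.mem_univ, if_true]
  have h2 : (1/(Real.sqrt d:ℂ)) * (1/(Real.sqrt d:ℂ)) = 1/(d:ℂ) := by
    rw [div_mul_div_comm, one_mul, hsd]
  have key : ∀ x : Fin d,
      1/(Real.sqrt d:ℂ) * ∑ x1 : Fin d, P x x1 * Q x x1 * (1/(Real.sqrt d:ℂ))
        = (∑ x1 : Fin d, P x x1 * Q x x1) / d := by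
    intro x
    rw [← Finset.sum_mul]
    linear_combination (∑ x1 : Fin d, P x x1 * Q x x1) * h2
  rw [Finset.sum_congr rfl (fun x _ => key x), ← Finset.sum_div]

lemma corr_formula (d : ℕ) (hd : 2 ≤ d) (ω : ℂ)
    (hω : ω = Complex.exp (2 * Real.pi * I / d)) (θv ζv : ℝ) (l : ℕ) (hl : l ≤ d) :
    (∑ i : Fin d, ∑ j : Fin d,
      (((Matrix.diagonal fun k : Fin d =>
          Complex.exp (2 * (Real.pi : ℂ) * Complex.I * (k.val : ℂ) * (θv : ℂ) / d))ᴴ *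
        (Matrix.of fun i j : Fin d => ω ^ (i.val * j.val) / (Real.sqrt d : ℂ)) *
        (Matrix.diagonal fun k : Fin d => ω ^ k.val) *
        (Matrix.of fun i j : Fin d => ω ^ (i.val * j.val) / (Real.sqrt d : ℂ))ᴴ *
        (Matrix.diagonal fun k : Fin d =>
          Complex.exp (2 * (Real.pi : ℂ) * Complex.I * (k.val : ℂ) * (θv : ℂ) / d))) ^ l) i j *
      (((Matrix.diagonal fun k : Fin d =>
          Complex.exp (2 * (Real.pi : ℂ) * Complex.I * (k.val : ℂ) * (ζv : ℂ) / d)) *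
        (Matrix.of fun i j : Fin d => ω ^ (i.val * j.val) / (Real.sqrt d : ℂ))ᴴ *
        (Matrix.diagonal fun k : Fin d => ω ^ k.val) *
        (Matrix.of fun i j : Fin d => ω ^ (i.val * j.val) / (Real.sqrt d : ℂ)) *
        (Matrix.diagonal fun k : Fin d =>
          Complex.exp (2 * (Real.pi : ℂ) * Complex.I * (k.val : ℂ) * (ζv : ℂ) / d))ᴴ) ^ (d - l)) i j)
      / d
    = (((d : ℂ) - l) * Complex.exp (2 * Real.pi * I * ((θv : ℂ) - (ζv : ℂ)) * l / d)
        + l * Complex.exp (2 * Real.pi * I * ((θv : ℂ) - (ζv : ℂ)) * ((l : ℂ) - d) / d)) / d := by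
  have hd0 : (d:ℕ) ≠ 0 := by omega
  have hd0' : (d:ℂ) ≠ 0 := Nat.cast_ne_zero.mpr hd0
  set F : Matrix (Fin d) (Fin d) ℂ :=
    Matrix.of fun i j : Fin d => ω ^ (i.val * j.val) / (Real.sqrt d : ℂ) with hF
  set Ω : Matrix (Fin d) (Fin d) ℂ := Matrix.diagonal fun k : Fin d => ω ^ k.val with hΩ
  set u : Fin d → ℂ := fun k : Fin d =>
    Complex.exp (2 * (Real.pi : ℂ) * Complex.I * (k.val : ℂ) * (θv : ℂ) / d) with hu
  set v : Fin d → ℂ := fun k : Fin d =>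
    Complex.exp (2 * (Real.pi : ℂ) * Complex.I * (k.val : ℂ) * (ζv : ℂ) / d) with hv
  have hstar : ∀ (r : ℝ) (k : Fin d),
      star (Complex.exp (2 * (Real.pi : ℂ) * Complex.I * (k.val : ℂ) * (r : ℂ) / d))
        = Complex.exp (-(2 * (Real.pi : ℂ) * Complex.I * (k.val : ℂ) * (r : ℂ) / d)) := by
    intro r k
    rw [Complex.star_def, ← Complex.exp_conj]
    congr 1
    simp only [map_div₀, _root_.map_mul, Complex.conj_I, Complex.conj_ofReal, map_ofNat,
      Complex.conj_natCast]
    ring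
  have hdiag : ∀ w : Fin d → ℂ, (∀ k, w k * star (w k) = 1) →
      Matrix.diagonal w * (Matrix.diagonal w)ᴴ = 1 := by
    intro w hw
    rw [Matrix.diagonal_conjTranspose, Matrix.diagonal_mul_diagonal]
    have : (fun i => w i * star w i) = fun _ => (1:ℂ) := funext fun k => hw k
    rw [this, Matrix.diagonal_one]
  have hUU : Matrix.diagonal u * (Matrix.diagonal u)ᴴ = 1 := by
    refine hdiag u fun k => ?_
    rw [hu]
    simp only
    rw [hstar θv k, exp_mul_exp _ _ 0 (by ring), Complex.exp_zero]
  have hVV : Matrix.diagonal v * (Matrix.diagonal v)ᴴ = 1 := by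
    refine hdiag v fun k => ?_
    rw [hv]
    simp only
    rw [hstar ζv k, exp_mul_exp _ _ 0 (by ring), Complex.exp_zero]
  have hFF : F * Fᴴ = 1 := by
    have h := shift1 d hd ω hω 0
    rw [← hF, pow_zero, Matrix.mul_one] at h
    rw [h]
    ext i j
    simp only [Matrix.of_apply, Nat.add_zero, Nat.mod_eq_of_lt i.isLt, Matrix.one_apply,
      Fin.val_eq_val]
  have hF'F : Fᴴ * F = 1 := by
    have h := shift2 d hd ω hω 0
    rw [← hF, pow_zero, Matrix.mul_one] at h
    rw [h]
    ext i j
    simp only [Matrix.of_apply, Nat.add_zero, Nat.mod_eq_of_lt j.isLt, Matrix.one_apply,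
      Fin.val_eq_val, eq_comm]
  -- powers of A and B
  have hA : ((Matrix.diagonal u)ᴴ * F * Ω * Fᴴ * Matrix.diagonal u) ^ l
      = (Matrix.diagonal u)ᴴ * (F * Ω ^ l * Fᴴ) * Matrix.diagonal u := by
    have hG : (Fᴴ * Matrix.diagonal u) * (Fᴴ * Matrix.diagonal u)ᴴ = 1 := by
      rw [Matrix.conjTranspose_mul, Matrix.conjTranspose_conjTranspose]
      calc Fᴴ * Matrix.diagonal u * ((Matrix.diagonal u)ᴴ * F)
          = Fᴴ * (Matrix.diagonal u * (Matrix.diagonal u)ᴴ) * F := by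
            simp only [Matrix.mul_assoc]
        _ = 1 := by rw [hUU, Matrix.mul_one, hF'F]
    have h1 : (Matrix.diagonal u)ᴴ * F * Ω * Fᴴ * Matrix.diagonal u
        = (Fᴴ * Matrix.diagonal u)ᴴ * Ω * (Fᴴ * Matrix.diagonal u) := by
      rw [Matrix.conjTranspose_mul, Matrix.conjTranspose_conjTranspose]
      simp only [Matrix.mul_assoc]
    rw [h1, conj_pow _ _ hG, Matrix.conjTranspose_mul, Matrix.conjTranspose_conjTranspose]
    simp only [Matrix.mul_assoc]
  have hB : (Matrix.diagonal v * Fᴴ * Ω * F * (Matrix.diagonal v)ᴴ) ^ (d - l)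
      = Matrix.diagonal v * (Fᴴ * Ω ^ (d - l) * F) * (Matrix.diagonal v)ᴴ := by
    have hK : (F * (Matrix.diagonal v)ᴴ) * (F * (Matrix.diagonal v)ᴴ)ᴴ = 1 := by
      rw [Matrix.conjTranspose_mul, Matrix.conjTranspose_conjTranspose]
      calc F * (Matrix.diagonal v)ᴴ * (Matrix.diagonal v * Fᴴ)
          = F * ((Matrix.diagonal v)ᴴ * Matrix.diagonal v) * Fᴴ := by
            simp only [Matrix.mul_assoc]
        _ = 1 := by rw [mul_eq_one_comm.mp hVV, Matrix.mul_one, hFF]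
    have h1 : Matrix.diagonal v * Fᴴ * Ω * F * (Matrix.diagonal v)ᴴ
        = (F * (Matrix.diagonal v)ᴴ)ᴴ * Ω * (F * (Matrix.diagonal v)ᴴ) := by
      rw [Matrix.conjTranspose_mul, Matrix.conjTranspose_conjTranspose]
      simp only [Matrix.mul_assoc]
    rw [h1, conj_pow _ _ hK, Matrix.conjTranspose_mul, Matrix.conjTranspose_conjTranspose]
    simp only [Matrix.mul_assoc]
  have hS1 := shift1 d hd ω hω l
  rw [← hF, ← hΩ] at hS1
  have hS2 := shift2 d hd ω hω (d - l)
  rw [← hF, ← hΩ] at hS2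
  rw [hA, hB, hS1, hS2]
  -- entrywise description
  have hentry : ∀ i j : Fin d,
      ((Matrix.diagonal u)ᴴ *
        (Matrix.of fun i j : Fin d => if ((i:ℕ) + l) % d = (j:ℕ) then (1:ℂ) else 0) *
        Matrix.diagonal u) i j *
      (Matrix.diagonal v *
        (Matrix.of fun i j : Fin d => if ((j:ℕ) + (d - l)) % d = (i:ℕ) then (1:ℂ) else 0) *
        (Matrix.diagonal v)ᴴ) i j
      = if ((i:ℕ) + l) % d = (j:ℕ)
          then star (u i) * u j * (v i * star (v j)) else 0 := by
    intro i j
    rw [Matrix.diagonal_conjTranspose, Matrix.diagonal_conjTranspose,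
      Matrix.mul_diagonal, Matrix.mul_diagonal, Matrix.diagonal_mul, Matrix.diagonal_mul]
    simp only [Matrix.of_apply, Pi.star_apply]
    have hcond : (((j:ℕ) + (d - l)) % d = (i:ℕ)) ↔ (((i:ℕ) + l) % d = (j:ℕ)) := by
      rw [← dvd_iff_mod, ← dvd_iff_mod]
      constructor
      · intro h
        rw [show ((i:ℤ) + l - j) = (d:ℤ) - ((j:ℤ) + ((d - l : ℕ):ℤ) - i) by
          push_cast [Nat.cast_sub hl]; ring]
        exact dvd_sub (dvd_refl _) h
      · intro h
        rw [show ((j:ℤ) + ((d - l : ℕ):ℤ) - i) = (d:ℤ) - ((i:ℤ) + l - j) by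
          push_cast [Nat.cast_sub hl]; ring]
        exact dvd_sub (dvd_refl _) h
    by_cases hc : ((i:ℕ) + l) % d = (j:ℕ)
    · rw [if_pos hc, if_pos hc, if_pos (hcond.mpr hc)]
      ring
    · rw [if_neg hc, if_neg hc, if_neg (fun h => hc (hcond.mp h))]
      ring
  rw [Finset.sum_congr rfl fun i _ => Finset.sum_congr rfl fun j _ => hentry i j]
  -- collapse the inner sum
  have hlt : ∀ i : Fin d, ((i:ℕ) + l) % d < d := fun i => Nat.mod_lt _ (by omega)
  have hinner : ∀ i : Fin d,
      (∑ j : Fin d, if ((i:ℕ) + l) % d = (j:ℕ)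
          then star (u i) * u j * (v i * star (v j)) else 0)
      = star (u i) * u ⟨((i:ℕ) + l) % d, hlt i⟩ *
          (v i * star (v ⟨((i:ℕ) + l) % d, hlt i⟩)) := by
    intro i
    rw [Finset.sum_congr rfl fun j _ =>
      if_congr (Iff.symm (Fin.ext_iff (a := ⟨((i:ℕ) + l) % d, hlt i⟩) (b := j))) rfl rfl]
    simp [Finset.sum_ite_eq]
  rw [Finset.sum_congr rfl fun i _ => hinner i]
  have comb : ∀ p q r s t : ℂ, p + q + (r + s) = t →
      Complex.exp p * Complex.exp q * (Complex.exp r * Complex.exp s) = Complex.exp t := by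
    intro p q r s t h
    rw [← Complex.exp_add, ← Complex.exp_add, ← Complex.exp_add, h]
  have hval : ∀ i : Fin d,
      star (u i) * u ⟨((i:ℕ) + l) % d, hlt i⟩ *
        (v i * star (v ⟨((i:ℕ) + l) % d, hlt i⟩))
      = if (i:ℕ) + l < d
          then Complex.exp (2 * Real.pi * I * ((θv : ℂ) - (ζv : ℂ)) * l / d)
          else Complex.exp (2 * Real.pi * I * ((θv : ℂ) - (ζv : ℂ)) * ((l : ℂ) - d) / d) := by
    intro i
    have hiv := i.isLt
    by_cases hi : (i:ℕ) + l < d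
    · rw [if_pos hi, hu, hv]
      simp only
      rw [hstar θv i, hstar ζv ⟨((i:ℕ) + l) % d, hlt i⟩]
      apply comb
      simp only [Fin.val_mk]
      rw [Nat.mod_eq_of_lt hi]
      push_cast
      ring
    · rw [if_neg hi, hu, hv]
      simp only
      rw [hstar θv i, hstar ζv ⟨((i:ℕ) + l) % d, hlt i⟩]
      apply comb
      simp only [Fin.val_mk]
      rw [show ((i:ℕ) + l) % d = (i:ℕ) + l - d by
        rw [Nat.mod_eq_sub_mod (by omega), Nat.mod_eq_of_lt (by omega)]]
      push_cast [Nat.cast_sub (show d ≤ (i:ℕ) + l by omega)]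
      ring
  rw [Finset.sum_congr rfl fun i _ => hval i]
  rw [Fin.sum_univ_eq_sum_range (fun k =>
    if k + l < d
      then Complex.exp (2 * Real.pi * I * ((θv : ℂ) - (ζv : ℂ)) * l / d)
      else Complex.exp (2 * Real.pi * I * ((θv : ℂ) - (ζv : ℂ)) * ((l : ℂ) - d) / d)) d]
  rw [Finset.range_eq_Ico, ← Finset.sum_Ico_consecutive _ (Nat.zero_le (d - l)) (Nat.sub_le d l)]
  rw [Finset.sum_congr rfl (fun k hk => if_pos (by
      have := (Finset.mem_Ico.mp hk).2; omega)),
    Finset.sum_congr rfl (fun k hk => if_neg (by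
      have := (Finset.mem_Ico.mp hk).1; omega))]
  rw [Finset.sum_const, Finset.sum_const, Nat.card_Ico, Nat.card_Ico]
  congr 1
  rw [nsmul_eq_mul, nsmul_eq_mul, Nat.sub_zero, Nat.sub_sub_self hl, Nat.cast_sub hl]

end SatwapProofAux

open SatwapProofAux

set_option maxHeartbeats 1000000 in
/-- The maximally entangled state `ψ⁺_d = (1/√d) ∑ₖ |k⟩⊗|k⟩` together with the optimal
CGLMP-type measurements `Aₓ = Uₓᴴ F Ω Fᴴ Uₓ`, `B_y = V_y Fᴴ Ω F V_yᴴ` attains the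
Tsirelson bound `Ĩ_d = 2(d-1)` of the SATWAP Bell inequality. -/
theorem satwap_maximal_violation (d : ℕ) (hd : 2 ≤ d) :
    let ω : ℂ := Complex.exp (2 * (Real.pi : ℂ) * Complex.I / d)
    let a : ℕ → ℂ := fun l => (1 / (Real.sqrt 2 : ℂ)) *
      Complex.exp (Complex.I * (Real.pi : ℂ) * (2 * (l : ℂ) - (d : ℂ)) / (4 * d))
    let F : Matrix (Fin d) (Fin d) ℂ :=
      Matrix.of fun i j : Fin d => ω ^ (i.val * j.val) / (Real.sqrt d : ℂ)
    let Ω : Matrix (Fin d) (Fin d) ℂ := Matrix.diagonal fun j : Fin d => ω ^ j.val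
    let θ : Fin 2 → ℝ := ![1 / 4, 3 / 4]
    let ζ : Fin 2 → ℝ := ![1 / 2, 1]
    let U : Fin 2 → Matrix (Fin d) (Fin d) ℂ := fun x =>
      Matrix.diagonal fun j : Fin d =>
        Complex.exp (2 * (Real.pi : ℂ) * Complex.I * (j.val : ℂ) * (θ x : ℂ) / d)
    let V : Fin 2 → Matrix (Fin d) (Fin d) ℂ := fun y =>
      Matrix.diagonal fun j : Fin d =>
        Complex.exp (2 * (Real.pi : ℂ) * Complex.I * (j.val : ℂ) * (ζ y : ℂ) / d)
    let A : Fin 2 → Matrix (Fin d) (Fin d) ℂ := fun x => (U x)ᴴ * F * Ω * Fᴴ * U x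
    let B : Fin 2 → Matrix (Fin d) (Fin d) ℂ := fun y => V y * Fᴴ * Ω * F * (V y)ᴴ
    let ψ : Fin d × Fin d → ℂ :=
      fun kk => if kk.1 = kk.2 then 1 / (Real.sqrt d : ℂ) else 0
    let corr : Matrix (Fin d) (Fin d) ℂ → Matrix (Fin d) (Fin d) ℂ → ℂ :=
      fun P Q => star ψ ⬝ᵥ ((P ⊗ₖ Q) *ᵥ ψ)
    (∑ l ∈ Finset.Icc 1 (d - 1),
      (a l * corr (A 0 ^ l) (B 0 ^ (d - l)) +
       (starRingEnd ℂ) (a l) * ω ^ l * corr (A 0 ^ l) (B 1 ^ (d - l)) +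
       a l * corr (A 1 ^ l) (B 1 ^ (d - l)) +
       (starRingEnd ℂ) (a l) * corr (A 1 ^ l) (B 0 ^ (d - l))))
      = 2 * ((d : ℂ) - 1) := by
  intro ω a F Ω θ ζ U V A B ψ corr
  have hd0' : (d:ℂ) ≠ 0 := Nat.cast_ne_zero.mpr (by omega)
  have hω : ω = Complex.exp (2 * (Real.pi : ℂ) * Complex.I / d) := rfl
  have hsum : ∀ x y : Fin 2, ∀ l : ℕ, l ≤ d →
      corr (A x ^ l) (B y ^ (d - l))
        = (((d : ℂ) - l) * Complex.exp (2 * Real.pi * I * ((θ x : ℂ) - (ζ y : ℂ)) * l / d)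
            + l * Complex.exp (2 * Real.pi * I * ((θ x : ℂ) - (ζ y : ℂ)) * ((l : ℂ) - d) / d))
          / d := by
    intro x y l hl
    exact (corr_eq d hd (A x ^ l) (B y ^ (d - l))).trans
      (corr_formula d hd ω hω (θ x) (ζ y) l hl)
  have hterm : ∀ l ∈ Finset.Icc 1 (d - 1),
      (a l * corr (A 0 ^ l) (B 0 ^ (d - l)) +
       (starRingEnd ℂ) (a l) * ω ^ l * corr (A 0 ^ l) (B 1 ^ (d - l)) +
       a l * corr (A 1 ^ l) (B 1 ^ (d - l)) +
       (starRingEnd ℂ) (a l) * corr (A 1 ^ l) (B 0 ^ (d - l))) = 2 := by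
    intro l hl
    have hld : l ≤ d := by
      have := (Finset.mem_Icc.mp hl).2; omega
    rw [hsum 0 0 l hld, hsum 0 1 l hld, hsum 1 1 l hld, hsum 1 0 l hld]
    have hθ0 : θ 0 = 1/4 := rfl
    have hθ1 : θ 1 = 3/4 := rfl
    have hζ0 : ζ 0 = 1/2 := rfl
    have hζ1 : ζ 1 = 1 := rfl
    have ha : a l = (1 / (Real.sqrt 2 : ℂ)) *
      Complex.exp (Complex.I * (Real.pi : ℂ) * (2 * (l : ℂ) - (d : ℂ)) / (4 * d)) := rfl
    have hωl : ω ^ l = Complex.exp ((l : ℂ) * (2 * (Real.pi : ℂ) * Complex.I / d)) := by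
      rw [hω, Complex.exp_nat_mul]
    have hconj : (starRingEnd ℂ) (a l) = (1 / (Real.sqrt 2 : ℂ)) *
        Complex.exp (-(Complex.I * (Real.pi : ℂ) * (2 * (l : ℂ) - (d : ℂ)) / (4 * d))) := by
      rw [ha, _root_.map_mul, ← Complex.exp_conj]
      congr 1
      · simp [Complex.conj_ofReal]
      · congr 1
        simp only [map_div₀, _root_.map_mul, map_sub, Complex.conj_I, Complex.conj_ofReal,
          map_ofNat, Complex.conj_natCast]
        ring
    rw [ha, hconj, hωl, hθ0, hθ1, hζ0, hζ1]
    push_cast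
    have hs2 : ((Real.sqrt 2 : ℝ) : ℂ) ≠ 0 := by
      norm_cast
      positivity
    have hcc : Complex.exp ((Real.pi : ℂ) * Complex.I / 4)
        + Complex.exp (-((Real.pi : ℂ) * Complex.I / 4)) = ((Real.sqrt 2 : ℝ) : ℂ) := by
      have h1 : ((Real.pi : ℂ) * Complex.I / 4 : ℂ) = ((Real.pi / 4 : ℝ) : ℂ) * Complex.I := by
        push_cast; ring
      rw [h1, ← neg_mul, Complex.exp_mul_I, Complex.exp_mul_I, Complex.cos_neg,
        Complex.sin_neg, ← Complex.ofReal_cos, Real.cos_pi_div_four]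
      push_cast
      ring
    have h1 : Complex.exp (Complex.I * (Real.pi:ℂ) * (2 * (l:ℂ) - (d:ℂ)) / (4 * (d:ℂ))) *
        Complex.exp (2 * (Real.pi:ℂ) * Complex.I * (1/4 - 1/2) * (l:ℂ) / (d:ℂ))
        = Complex.exp (-((Real.pi : ℂ) * Complex.I / 4)) := by
      rw [← Complex.exp_add]; congr 1; field_simp; ring
    have h2 : Complex.exp (Complex.I * (Real.pi:ℂ) * (2 * (l:ℂ) - (d:ℂ)) / (4 * (d:ℂ))) *
        Complex.exp (2 * (Real.pi:ℂ) * Complex.I * (1/4 - 1/2) * ((l:ℂ) - (d:ℂ)) / (d:ℂ))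
        = Complex.exp ((Real.pi : ℂ) * Complex.I / 4) := by
      rw [← Complex.exp_add]; congr 1; field_simp; ring
    have h3 : Complex.exp (-(Complex.I * (Real.pi:ℂ) * (2 * (l:ℂ) - (d:ℂ)) / (4 * (d:ℂ)))) *
        Complex.exp ((l:ℂ) * (2 * (Real.pi:ℂ) * Complex.I / (d:ℂ))) *
        Complex.exp (2 * (Real.pi:ℂ) * Complex.I * (1/4 - 1) * (l:ℂ) / (d:ℂ))
        = Complex.exp ((Real.pi : ℂ) * Complex.I / 4) := by
      rw [← Complex.exp_add, ← Complex.exp_add]; congr 1; field_simp; ring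
    have h4 : Complex.exp (-(Complex.I * (Real.pi:ℂ) * (2 * (l:ℂ) - (d:ℂ)) / (4 * (d:ℂ)))) *
        Complex.exp ((l:ℂ) * (2 * (Real.pi:ℂ) * Complex.I / (d:ℂ))) *
        Complex.exp (2 * (Real.pi:ℂ) * Complex.I * (1/4 - 1) * ((l:ℂ) - (d:ℂ)) / (d:ℂ))
        = Complex.exp (-((Real.pi : ℂ) * Complex.I / 4)) := by
      rw [← Complex.exp_add, ← Complex.exp_add]
      apply exp_eq_of_sub_two_pi
      field_simp
      ring
    have h5 : Complex.exp (Complex.I * (Real.pi:ℂ) * (2 * (l:ℂ) - (d:ℂ)) / (4 * (d:ℂ))) *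
        Complex.exp (2 * (Real.pi:ℂ) * Complex.I * (3/4 - 1) * (l:ℂ) / (d:ℂ))
        = Complex.exp (-((Real.pi : ℂ) * Complex.I / 4)) := by
      rw [← Complex.exp_add]; congr 1; field_simp; ring
    have h6 : Complex.exp (Complex.I * (Real.pi:ℂ) * (2 * (l:ℂ) - (d:ℂ)) / (4 * (d:ℂ))) *
        Complex.exp (2 * (Real.pi:ℂ) * Complex.I * (3/4 - 1) * ((l:ℂ) - (d:ℂ)) / (d:ℂ))
        = Complex.exp ((Real.pi : ℂ) * Complex.I / 4) := by
      rw [← Complex.exp_add]; congr 1; field_simp; ring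
    have h7 : Complex.exp (-(Complex.I * (Real.pi:ℂ) * (2 * (l:ℂ) - (d:ℂ)) / (4 * (d:ℂ)))) *
        Complex.exp (2 * (Real.pi:ℂ) * Complex.I * (3/4 - 1/2) * (l:ℂ) / (d:ℂ))
        = Complex.exp ((Real.pi : ℂ) * Complex.I / 4) := by
      rw [← Complex.exp_add]; congr 1; field_simp; ring
    have h8 : Complex.exp (-(Complex.I * (Real.pi:ℂ) * (2 * (l:ℂ) - (d:ℂ)) / (4 * (d:ℂ)))) *
        Complex.exp (2 * (Real.pi:ℂ) * Complex.I * (3/4 - 1/2) * ((l:ℂ) - (d:ℂ)) / (d:ℂ))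
        = Complex.exp (-((Real.pi : ℂ) * Complex.I / 4)) := by
      rw [← Complex.exp_add]; congr 1; field_simp; ring
    have hdinv : (d:ℂ) * ((d:ℂ))⁻¹ = 1 := mul_inv_cancel₀ hd0'
    have hsinv : ((Real.sqrt 2 : ℝ) : ℂ) * (((Real.sqrt 2 : ℝ) : ℂ))⁻¹ = 1 :=
      mul_inv_cancel₀ hs2
    linear_combination
      (((d:ℂ) - l) / ((Real.sqrt 2 : ℝ) : ℂ) / (d:ℂ)) * h1 +
      ((l:ℂ) / ((Real.sqrt 2 : ℝ) : ℂ) / (d:ℂ)) * h2 +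
      (((d:ℂ) - l) / ((Real.sqrt 2 : ℝ) : ℂ) / (d:ℂ)) * h3 +
      ((l:ℂ) / ((Real.sqrt 2 : ℝ) : ℂ) / (d:ℂ)) * h4 +
      (((d:ℂ) - l) / ((Real.sqrt 2 : ℝ) : ℂ) / (d:ℂ)) * h5 +
      ((l:ℂ) / ((Real.sqrt 2 : ℝ) : ℂ) / (d:ℂ)) * h6 +
      (((d:ℂ) - l) / ((Real.sqrt 2 : ℝ) : ℂ) / (d:ℂ)) * h7 +
      ((l:ℂ) / ((Real.sqrt 2 : ℝ) : ℂ) / (d:ℂ)) * h8 +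
      (2 * (d:ℂ) / ((Real.sqrt 2 : ℝ) : ℂ) / (d:ℂ)) * hcc +
      (2 * (d:ℂ) / (d:ℂ)) * hsinv +
      2 * hdinv
  rw [Finset.sum_congr rfl hterm, Finset.sum_const, Nat.card_Icc]
  have h1d : 1 ≤ d := by omega
  rw [nsmul_eq_mul]
  push_cast [Nat.cast_sub h1d]
  ring
end

section
/- For $\xi \in \mathbb{R}$ define, for a quadruple $(\alpha_1, \alpha_2, \beta_1, \beta_2) \in (\mathbb{Z}/3\mathbb{Z})^4$ of deterministic outcomes, $I_3(\xi) := \mathbf{1}[\alpha_1 = \beta_1] + \mathbf{1}[\alpha_2 = \beta_2] + \mathbf{1}[\alpha_1 = \beta_2 - 1] + \mathbf{1}[\alpha_2 = \beta_1] - \xi\big( \mathbf{1}[\alpha_1 = \beta_1 - 1] + \mathbf{1}[\alpha_2 = \beta_2 - 1] + \mathbf{1}[\alpha_1 = \beta_2] + \mathbf{1}[\alpha_2 = \beta_1 + 1] \big)$, all equalities taken modulo $3$. Then the classical (local hidden variable) bound $C_3(\xi) := \max_{(\alpha_1,\alpha_2,\beta_1,\beta_2) \in (\mathbb{Z}/3\mathbb{Z})^4}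 I_3(\xi)$ equals: $-4\xi$ if $\xi \leq -1$; $3 - \xi$ if $-1 \leq \xi \leq 1$; and $2$ if $\xi \geq 1$. -/
set_option maxHeartbeats 1600000


/-- Classical (local-hidden-variable) bound of the one-parameter family of Bell
expressions `I₃(ξ)` for two three-outcome measurements per party: the maximum over
deterministic strategies `(α₁, α₂, β₁, β₂) ∈ (ℤ/3ℤ)⁴` equals `-4ξ` for `ξ ≤ -1`,
`3 - ξ` for `-1 ≤ ξ ≤ 1`, and `2` for `ξ ≥ 1`. -/
theorem cglmp_family_classical_bound (ξ : ℝ) :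
    let I3 : ZMod 3 × ZMod 3 × ZMod 3 × ZMod 3 → ℝ := fun q =>
      ((if q.1 = q.2.2.1 then (1 : ℝ) else 0) +
       (if q.2.1 = q.2.2.2 then (1 : ℝ) else 0) +
       (if q.1 = q.2.2.2 - 1 then (1 : ℝ) else 0) +
       (if q.2.1 = q.2.2.1 then (1 : ℝ) else 0)) -
      ξ * ((if q.1 = q.2.2.1 - 1 then (1 : ℝ) else 0) +
           (if q.2.1 = q.2.2.2 - 1 then (1 : ℝ) else 0) +
           (if q.1 = q.2.2.2 then (1 : ℝ) else 0) +
           (if q.2.1 = q.2.2.1 + 1 then (1 : ℝ) else 0))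
    (ξ ≤ -1 → Finset.univ.sup' Finset.univ_nonempty I3 = -4 * ξ) ∧
    (-1 ≤ ξ → ξ ≤ 1 → Finset.univ.sup' Finset.univ_nonempty I3 = 3 - ξ) ∧
    (1 ≤ ξ → Finset.univ.sup' Finset.univ_nonempty I3 = 2) := by
  intro I3
  have hz : ∀ x : ZMod 3, x = 0 ∨ x = 1 ∨ x = 2 := by decide
  refine ⟨?_, ?_, ?_⟩
  · intro h
    refine le_antisymm (Finset.sup'_le _ _ ?_) ?_
    · rintro ⟨a, b, c, d⟩ -
      rcases hz a with rfl | rfl | rfl <;> rcases hz b with rfl | rfl | rfl <;>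
        rcases hz c with rfl | rfl | rfl <;> rcases hz d with rfl | rfl | rfl <;>
        simp only [I3] <;> simp (config := { decide := true }) only [] <;> norm_num <;> linarith
    · refine le_trans ?_ (Finset.le_sup' I3 (Finset.mem_univ ((2 : ZMod 3), (1 : ZMod 3), (0 : ZMod 3), (2 : ZMod 3))))
      simp only [I3]
      simp (config := { decide := true }) only []
      norm_num
      try linarith
  · intro h1 h2
    refine le_antisymm (Finset.sup'_le _ _ ?_) ?_
    · rintro ⟨a, b, c, d⟩ -
      rcases hz a with rfl | rfl | rfl <;> rcases hz b with rfl | rfl | rfl <;>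
        rcases hz c with rfl | rfl | rfl <;> rcases hz d with rfl | rfl | rfl <;>
        simp only [I3] <;> simp (config := { decide := true }) only [] <;> norm_num <;> linarith
    · refine le_trans ?_ (Finset.le_sup' I3 (Finset.mem_univ ((0 : ZMod 3), (0 : ZMod 3), (0 : ZMod 3), (0 : ZMod 3))))
      simp only [I3]
      simp (config := { decide := true }) only []
      norm_num
      try linarith
  · intro h
    refine le_antisymm (Finset.sup'_le _ _ ?_) ?_
    · rintro ⟨a, b, c, d⟩ -
      rcases hz a with rfl | rfl | rfl <;> rcases hz b with rfl | rfl | rfl <;>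
        rcases hz c with rfl | rfl | rfl <;> rcases hz d with rfl | rfl | rfl <;>
        simp only [I3] <;> simp (config := { decide := true }) only [] <;> norm_num <;> linarith
    · refine le_trans ?_ (Finset.le_sup' I3 (Finset.mem_univ ((0 : ZMod 3), (2 : ZMod 3), (0 : ZMod 3), (2 : ZMod 3))))
      simp only [I3]
      simp (config := { decide := true }) only []
      norm_num
      try linarith
end

section
/- Let $d = 3$, $\gamma > 0$, and $|\psi_\gamma\rangle = \tfrac{1}{\sqrt{2+\gamma^2}}(|00\rangle + \gamma|11\rangle + |22\rangle) \in \mathbb{C}^3 \otimes \mathbb{C}^3$. Define the measurement eigenvectors $|a\rangle_x = \tfrac{1}{\sqrt{3}} \sum_{k=0}^{2} e^{2\pi i k (a - \theta_x)/3} |k\rangle$ and $|b\rangle_y = \tfrac{1}{\sqrt{3}} \sum_{k=0}^{2} e^{2\pi i k (-b + \zeta_y)/3} |k\rangle$ for $a, b \in \{0,1,2\}$, with $\theta_1 = 1/4$, $\theta_2 = 3/4$, $\zeta_1 = 1/2$, $\zeta_2 = 1$, and set $p(ab|xy) = |(\langle a|_x \otimes \langle b|_y)\,|\psi_\gamma\rangle|^2$.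 Then for every $\xi \in \mathbb{R}$ the Bell expression $I_3(\xi) := P(A_1 = B_1) + P(A_2 = B_2) + P(A_1 = B_2 - 1) + P(A_2 = B_1) - \xi[P(A_1 = B_1 - 1) + P(A_2 = B_2 - 1) + P(A_1 = B_2) + P(A_2 = B_1 + 1)]$, where $P(A_x = B_y + k) := \sum_{a=0}^{2} p((a+k \bmod 3)\, a\, |xy)$, evaluates to $\mathcal{I}(\xi, \gamma) = \dfrac{4\big[3 + \gamma(2\sqrt{3} + \gamma - \xi\gamma)\big]}{3(2+\gamma^2)}$. -/
/-!
Since `ψ` is diagonal with coefficients `(1, γ, 1)` and the measurement vectors are Fourier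
phases, the amplitude `(⟨a|ₓ ⊗ ⟨b|_y)|ψ⟩` is `(1 + γ w + w²) / (3 √(2 + γ²))` with
`w = exp (-iφ)`, `φ = 2π (a - b - θₓ + ζ_y) / 3`. Factoring out `w` turns its modulus into
`|γ + 2 cos φ|`, so `P(Aₓ = B_y + k)` depends only on `k + ζ_y - θₓ` modulo `3`. For the four
positive terms of `I₃(ξ)` this phase is `±1/4` modulo `3` (`cos φ = √3/2`), for the four
negative ones `±3/4` (`cos φ = 0`).
-/

open Complex ComplexConjugate

lemma norm_one_add_mul_exp_add_exp_sq (γ φ : ℝ) :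
    ‖1 + γ * exp (-(φ * I)) + exp (-(φ * I)) ^ 2‖ = |γ + 2 * Real.cos φ| := by
  set w := exp (-(φ * I))
  have hw : w * exp (φ * I) = 1 := by rw [← exp_add]; simp
  have hcos : exp (φ * I) + w = 2 * cos φ := by
    rw [cos]; simp only [w, neg_mul]; ring
  have hfactor : 1 + γ * w + w ^ 2 = w * ((γ + 2 * Real.cos φ : ℝ) : ℂ) := by
    push_cast; rw [← hcos]; linear_combination (-1 : ℂ) * hw
  rw [hfactor, norm_mul, norm_real, Real.norm_eq_abs, norm_exp]
  simp

lemma conj_phase_mul_conj_phase (k a b : ℕ) (T Z : ℝ) :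
    conj (exp (2 * Real.pi * I * k * (a - T) / 3) / Real.sqrt 3) *
      conj (exp (2 * Real.pi * I * k * (-b + Z) / 3) / Real.sqrt 3)
      = exp (-((2 * Real.pi * ((a - b : ℝ) + (Z - T)) / 3 : ℝ) * I)) ^ k / 3 := by
  have h3 : (Real.sqrt 3 : ℂ) * Real.sqrt 3 = 3 := by
    rw [← ofReal_mul, Real.mul_self_sqrt (by norm_num)]; norm_num
  rw [← map_mul, div_mul_div_comm, ← exp_add, h3, map_div₀, ← exp_conj, ← exp_nat_mul, map_ofNat]
  congr 2
  simp only [map_add, map_mul, map_div₀, map_neg, map_sub, conj_I, conj_ofReal, map_natCast,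
    map_ofNat]
  push_cast
  ring

lemma norm_sq_cglmp_amplitude (γ : ℝ) (a b : ℕ) (T Z : ℝ) :
    ‖∑ k : Fin 3, ∑ k' : Fin 3,
      conj (exp (2 * Real.pi * I * (k.val : ℂ) * ((a : ℂ) - T) / 3) / Real.sqrt 3) *
      conj (exp (2 * Real.pi * I * (k'.val : ℂ) * (-(b : ℂ) + Z) / 3) / Real.sqrt 3) *
      (if k = k' then (if k = 1 then (γ : ℂ) else 1) / Real.sqrt (2 + γ ^ 2) else 0)‖ ^ 2
    = (γ + 2 * Real.cos (2 * Real.pi * ((a - b : ℝ) + (Z - T)) / 3)) ^ 2 / (9 * (2 + γ ^ 2)) := by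
  set φ : ℝ := 2 * Real.pi * ((a - b : ℝ) + (Z - T)) / 3 with hφ
  have hN : 0 < Real.sqrt (2 + γ ^ 2) := Real.sqrt_pos.mpr (by positivity)
  have hamp : ∑ k : Fin 3, ∑ k' : Fin 3,
      conj (exp (2 * Real.pi * I * (k.val : ℂ) * ((a : ℂ) - T) / 3) / Real.sqrt 3) *
      conj (exp (2 * Real.pi * I * (k'.val : ℂ) * (-(b : ℂ) + Z) / 3) / Real.sqrt 3) *
      (if k = k' then (if k = 1 then (γ : ℂ) else 1) / Real.sqrt (2 + γ ^ 2) else 0)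
      = (1 + γ * exp (-(φ * I)) + exp (-(φ * I)) ^ 2) / (3 * Real.sqrt (2 + γ ^ 2)) := by
    simp only [mul_ite, mul_zero, Finset.sum_ite_eq, Finset.mem_univ, if_true,
      conj_phase_mul_conj_phase, Fin.sum_univ_three, Fin.val_zero, Fin.val_one, Fin.val_two,
      Fin.reduceEq, reduceIte, pow_zero, pow_one, ← hφ]
    field_simp
  rw [hamp, norm_div, norm_one_add_mul_exp_add_exp_sq, norm_mul, norm_real,
    Real.norm_of_nonneg hN.le, norm_ofNat, div_pow, sq_abs, mul_pow, Real.sq_sqrt (by positivity)]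
  ring

lemma cos_two_pi_zmod_val_add_sub {n : ℕ} [NeZero n] (a k : ZMod n) (x : ℝ) :
    Real.cos (2 * Real.pi * ((((a + k).val : ℝ) - a.val) + x) / n) =
      Real.cos (2 * Real.pi * (k.val + x) / n) := by
  set q := (a.val + k.val) / n
  have hdiv : (a + k).val + n * q = a.val + k.val := by
    rw [ZMod.val_add]; exact Nat.mod_add_div _ _
  have hq : ((a + k).val : ℝ) - a.val = k.val - n * q := by
    have := congrArg (Nat.cast : ℕ → ℝ) hdiv
    push_cast at this
    linear_combination this
  have hn : (n : ℝ) ≠ 0 := NeZero.ne _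
  rw [hq]
  convert Real.cos_sub_nat_mul_two_pi _ q using 2
  field_simp
  ring

lemma sum_norm_sq_cglmp_amplitude_shift (γ T Z : ℝ) (k : ZMod 3) :
    ∑ a : ZMod 3, (γ + 2 * Real.cos (2 * Real.pi * ((((a + k).val : ℝ) - a.val) + (Z - T)) / 3))
        ^ 2 / (9 * (2 + γ ^ 2))
      = (γ + 2 * Real.cos (2 * Real.pi * (k.val + (Z - T)) / 3)) ^ 2 / (3 * (2 + γ ^ 2)) := by
  have hshift (a : ZMod 3) := cos_two_pi_zmod_val_add_sub a k (Z - T)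
  push_cast at hshift
  simp only [hshift, Finset.sum_const, Finset.card_univ, ZMod.card, nsmul_eq_mul]
  field_simp
  ring

lemma cos_two_pi_mul_div_three_eq_sqrt_three_div_two {δ : ℝ}
    (hδ : δ ∈ ({1 / 4, -1 / 4, 11 / 4} : Set ℝ)) :
    Real.cos (2 * Real.pi * δ / 3) = Real.sqrt 3 / 2 := by
  rcases hδ with rfl | rfl | rfl
  · rw [← Real.cos_pi_div_six]; ring_nf
  · rw [← Real.cos_pi_div_six, ← Real.cos_neg]; ring_nf
  · rw [← Real.cos_pi_div_six, ← Real.cos_neg, ← Real.cos_add_two_pi]; ring_nf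

lemma cos_two_pi_mul_div_three_eq_zero {δ : ℝ} (hδ : δ ∈ ({3 / 4, 9 / 4} : Set ℝ)) :
    Real.cos (2 * Real.pi * δ / 3) = 0 := by
  rcases hδ with rfl | rfl
  · rw [← Real.cos_pi_div_two]; ring_nf
  · rw [← Real.cos_pi_div_two, ← Real.cos_neg, ← Real.cos_add_two_pi]; ring_nf

theorem cglmp_family_quantum_value_general (γ : ℝ) (ξ : ℝ) :
    let θ : Fin 2 → ℝ := ![1 / 4, 3 / 4]
    let ζ : Fin 2 → ℝ := ![1 / 2, 1]
    let avec : Fin 2 → ZMod 3 → Fin 3 → ℂ := fun x a k =>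
      Complex.exp (2 * (Real.pi : ℂ) * Complex.I * (k.val : ℂ) *
        ((a.val : ℂ) - (θ x : ℂ)) / 3) / (Real.sqrt 3 : ℂ)
    let bvec : Fin 2 → ZMod 3 → Fin 3 → ℂ := fun y b k =>
      Complex.exp (2 * (Real.pi : ℂ) * Complex.I * (k.val : ℂ) *
        (-(b.val : ℂ) + (ζ y : ℂ)) / 3) / (Real.sqrt 3 : ℂ)
    let ψ : Fin 3 × Fin 3 → ℂ := fun kk =>
      if kk.1 = kk.2 then (if kk.1 = 1 then (γ : ℂ) else 1) / (Real.sqrt (2 + γ ^ 2) : ℂ)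
      else 0
    let p : ZMod 3 → ZMod 3 → Fin 2 → Fin 2 → ℝ := fun a b x y =>
      ‖∑ k : Fin 3, ∑ k' : Fin 3,
        (starRingEnd ℂ) (avec x a k) * (starRingEnd ℂ) (bvec y b k') * ψ (k, k')‖ ^ 2
    let Pk : Fin 2 → Fin 2 → ZMod 3 → ℝ := fun x y k => ∑ a : ZMod 3, p (a + k) a x y
    (Pk 0 0 0 + Pk 1 1 0 + Pk 0 1 (-1) + Pk 1 0 0) -
      ξ * (Pk 0 0 (-1) + Pk 1 1 (-1) + Pk 0 1 0 + Pk 1 0 1)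
      = 4 * (3 + γ * (2 * Real.sqrt 3 + γ - ξ * γ)) / (3 * (2 + γ ^ 2)) := by
  intro θ ζ avec bvec ψ p Pk
  have hPk (x y : Fin 2) (k : ZMod 3) : Pk x y k =
      (γ + 2 * Real.cos (2 * Real.pi * (k.val + (ζ y - θ x)) / 3)) ^ 2 / (3 * (2 + γ ^ 2)) := by
    simp only [Pk, p, avec, bvec, ψ, norm_sq_cglmp_amplitude]
    exact sum_norm_sq_cglmp_amplitude_shift γ (θ x) (ζ y) k
  have hcorrelated (x y : Fin 2) (k : ZMod 3)
      (h : (k.val : ℝ) + (ζ y - θ x) ∈ ({1 / 4, -1 / 4, 11 / 4} : Set ℝ)) :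
      Pk x y k = (γ + Real.sqrt 3) ^ 2 / (3 * (2 + γ ^ 2)) := by
    rw [hPk, cos_two_pi_mul_div_three_eq_sqrt_three_div_two h]; ring
  have hanticorrelated (x y : Fin 2) (k : ZMod 3)
      (h : (k.val : ℝ) + (ζ y - θ x) ∈ ({3 / 4, 9 / 4} : Set ℝ)) :
      Pk x y k = γ ^ 2 / (3 * (2 + γ ^ 2)) := by
    rw [hPk, cos_two_pi_mul_div_three_eq_zero h]; ring
  have hval : (1 : ZMod 3).val = 1 ∧ (-1 : ZMod 3).val = 2 := ⟨rfl, rfl⟩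
  rw [hcorrelated 0 0 0 (by norm_num [θ, ζ, hval]),
    hcorrelated 1 1 0 (by norm_num [θ, ζ, hval]),
    hcorrelated 0 1 (-1) (by norm_num [θ, ζ, hval]),
    hcorrelated 1 0 0 (by norm_num [θ, ζ, hval]),
    hanticorrelated 0 0 (-1) (by norm_num [θ, ζ, hval]),
    hanticorrelated 1 1 (-1) (by norm_num [θ, ζ, hval]),
    hanticorrelated 0 1 0 (by norm_num [θ, ζ, hval]),
    hanticorrelated 1 0 1 (by norm_num [θ, ζ, hval])]
  field_simp
  rw [add_sq, Real.sq_sqrt (by norm_num)]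
  ring

/-- The Bell expression `I₃(ξ)` evaluated on the partially entangled two-qutrit state
`|ψ_γ⟩ = (|00⟩ + γ|11⟩ + |22⟩)/√(2+γ²)` with the optimal CGLMP measurements
(eigenvectors `|a⟩ₓ`, `|b⟩_y` with phases `θ₁ = 1/4, θ₂ = 3/4, ζ₁ = 1/2, ζ₂ = 1`)
equals `𝓘(ξ, γ) = 4[3 + γ(2√3 + γ - ξγ)] / (3(2+γ²))`. -/
theorem cglmp_family_quantum_value (γ : ℝ) (hγ : 0 < γ) (ξ : ℝ) :
    let θ : Fin 2 → ℝ := ![1 / 4, 3 / 4]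
    let ζ : Fin 2 → ℝ := ![1 / 2, 1]
    let avec : Fin 2 → ZMod 3 → Fin 3 → ℂ := fun x a k =>
      Complex.exp (2 * (Real.pi : ℂ) * Complex.I * (k.val : ℂ) *
        ((a.val : ℂ) - (θ x : ℂ)) / 3) / (Real.sqrt 3 : ℂ)
    let bvec : Fin 2 → ZMod 3 → Fin 3 → ℂ := fun y b k =>
      Complex.exp (2 * (Real.pi : ℂ) * Complex.I * (k.val : ℂ) *
        (-(b.val : ℂ) + (ζ y : ℂ)) / 3) / (Real.sqrt 3 : ℂ)
    let ψ : Fin 3 × Fin 3 → ℂ := fun kk =>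
      if kk.1 = kk.2 then (if kk.1 = 1 then (γ : ℂ) else 1) / (Real.sqrt (2 + γ ^ 2) : ℂ)
      else 0
    let p : ZMod 3 → ZMod 3 → Fin 2 → Fin 2 → ℝ := fun a b x y =>
      ‖∑ k : Fin 3, ∑ k' : Fin 3,
        (starRingEnd ℂ) (avec x a k) * (starRingEnd ℂ) (bvec y b k') * ψ (k, k')‖ ^ 2
    let Pk : Fin 2 → Fin 2 → ZMod 3 → ℝ := fun x y k => ∑ a : ZMod 3, p (a + k) a x y
    (Pk 0 0 0 + Pk 1 1 0 + Pk 0 1 (-1) + Pk 1 0 0) -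
      ξ * (Pk 0 0 (-1) + Pk 1 1 (-1) + Pk 0 1 0 + Pk 1 0 1)
      = 4 * (3 + γ * (2 * Real.sqrt 3 + γ - ξ * γ)) / (3 * (2 + γ ^ 2)) :=
  cglmp_family_quantum_value_general γ ξ
end

section
/- Let $H$ be a complex inner product space and let $u, v, \psi \in H$ be unit vectors. Then $|\langle u, \psi \rangle|^2 + |\langle v, \psi \rangle|^2 \leq 1 + |\langle u, v \rangle|$. -/
/-!
Put `w = ⟪u, ψ⟫ • u + ⟪v, ψ⟫ • v` and `S = ‖⟪u, ψ⟫‖² + ‖⟪v, ψ⟫‖²`. Then `⟪w, ψ⟫ = S`, so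
Cauchy–Schwarz gives `S ≤ ‖w‖ ‖ψ‖`, while expanding `‖w‖²` and bounding the cross term by
AM–GM gives `‖w‖² ≤ S (1 + ‖⟪u, v⟫‖)`. Together `S² ≤ S (1 + ‖⟪u, v⟫‖) ‖ψ‖²`.
-/

open scoped InnerProductSpace

section

variable {E : Type*} [NormedAddCommGroup E] [InnerProductSpace ℂ E]

theorem norm_smul_add_smul_sq_le_of_norm_eq_one {u v : E} (hu : ‖u‖ = 1) (hv : ‖v‖ = 1)
    (a b : ℂ) :
    ‖a • u + b • v‖ ^ 2 ≤ (‖a‖ ^ 2 + ‖b‖ ^ 2) * (1 + ‖⟪u, v⟫_ℂ‖) := by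
  have hcross : RCLike.re ⟪a • u, b • v⟫_ℂ ≤ ‖a‖ * ‖b‖ * ‖⟪u, v⟫_ℂ‖ :=
    calc RCLike.re ⟪a • u, b • v⟫_ℂ ≤ ‖⟪a • u, b • v⟫_ℂ‖ := RCLike.re_le_norm _
      _ = ‖a‖ * ‖b‖ * ‖⟪u, v⟫_ℂ‖ := by
        rw [inner_smul_left, inner_smul_right, norm_mul, norm_mul, Complex.norm_conj, mul_assoc]
  have hamgm : 2 * ‖a‖ * ‖b‖ ≤ ‖a‖ ^ 2 + ‖b‖ ^ 2 := two_mul_le_add_sq _ _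
  rw [@norm_add_sq ℂ, norm_smul, norm_smul, hu, hv, mul_one, mul_one]
  nlinarith [norm_nonneg ⟪u, v⟫_ℂ]

theorem inner_smul_add_smul_eq_normSq_add_normSq (u v ψ : E) :
    ⟪⟪u, ψ⟫_ℂ • u + ⟪v, ψ⟫_ℂ • v, ψ⟫_ℂ = ((‖⟪u, ψ⟫_ℂ‖ ^ 2 + ‖⟪v, ψ⟫_ℂ‖ ^ 2 : ℝ) : ℂ) := by
  rw [inner_add_left, inner_smul_left, inner_smul_left, Complex.conj_mul', Complex.conj_mul']
  push_cast
  rfl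

theorem norm_inner_sq_add_norm_inner_sq_le {u v : E} (hu : ‖u‖ = 1) (hv : ‖v‖ = 1) (ψ : E) :
    ‖⟪u, ψ⟫_ℂ‖ ^ 2 + ‖⟪v, ψ⟫_ℂ‖ ^ 2 ≤ (1 + ‖⟪u, v⟫_ℂ‖) * ‖ψ‖ ^ 2 := by
  set S := ‖⟪u, ψ⟫_ℂ‖ ^ 2 + ‖⟪v, ψ⟫_ℂ‖ ^ 2
  set w := ⟪u, ψ⟫_ℂ • u + ⟪v, ψ⟫_ℂ • v
  have hS : 0 ≤ S := by positivity
  have hSw : S ≤ ‖w‖ * ‖ψ‖ :=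
    calc S = ‖⟪w, ψ⟫_ℂ‖ := by
          rw [inner_smul_add_smul_eq_normSq_add_normSq, Complex.norm_real, Real.norm_of_nonneg hS]
      _ ≤ ‖w‖ * ‖ψ‖ := norm_inner_le_norm w ψ
  have hw : ‖w‖ ^ 2 ≤ S * (1 + ‖⟪u, v⟫_ℂ‖) := norm_smul_add_smul_sq_le_of_norm_eq_one hu hv _ _
  have hSq : S * S ≤ S * ((1 + ‖⟪u, v⟫_ℂ‖) * ‖ψ‖ ^ 2) :=
    calc S * S ≤ (‖w‖ * ‖ψ‖) ^ 2 := by rw [← sq]; exact pow_le_pow_left₀ hS hSw 2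
      _ = ‖w‖ ^ 2 * ‖ψ‖ ^ 2 := mul_pow _ _ _
      _ ≤ S * (1 + ‖⟪u, v⟫_ℂ‖) * ‖ψ‖ ^ 2 := by gcongr
      _ = S * ((1 + ‖⟪u, v⟫_ℂ‖) * ‖ψ‖ ^ 2) := mul_assoc _ _ _
  rcases hS.eq_or_lt with hS0 | hSpos
  · rw [← hS0]; positivity
  · exact le_of_mul_le_mul_left hSq hSpos

end

/-- For unit vectors `u`, `v`, `ψ` in a complex inner product space,
`|⟨u, ψ⟩|² + |⟨v, ψ⟩|² ≤ 1 + |⟨u, v⟩|`. -/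
theorem unit_vectors_overlap_bound
    (H : Type) [NormedAddCommGroup H] [InnerProductSpace ℂ H]
    (u v ψ : H) (hu : ‖u‖ = 1) (hv : ‖v‖ = 1) (hψ : ‖ψ‖ = 1) :
    ‖(inner ℂ u ψ : ℂ)‖ ^ 2 + ‖(inner ℂ v ψ : ℂ)‖ ^ 2 ≤ 1 + ‖(inner ℂ u v : ℂ)‖ := by
  simpa [hψ] using norm_inner_sq_add_norm_inner_sq_le hu hv ψ
end

section
/- Define the $2 \times 2$ matrices $M_{PS}(\phi) = \begin{pmatrix} 1 & 0 \\ 0 & e^{i\phi} \end{pmatrix}$, $M_{BS} = \tfrac{1}{\sqrt{2}} \begin{pmatrix} i & 1 \\ 1 & i \end{pmatrix}$, and $M_{MZI}(\theta) = M_{BS}\, M_{PS}(\theta)\, M_{BS}$, so that $M_{MZI}(\theta) = e^{i(\theta+\pi)/2} \begin{pmatrix} \sin(\theta/2) & \cos(\theta/2) \\ \cos(\theta/2) & -\sin(\theta/2) \end{pmatrix}$. Then for every $(a, b) \in \mathbb{C}^2$ there exist real phases $\theta, \phi$ such that $M_{MZI}(\theta)\, M_{PS}(\phi) \begin{pmatrix}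 a \\ b \end{pmatrix} = \begin{pmatrix} c \\ 0 \end{pmatrix}$ for some $c \in \mathbb{C}$ with $|c| = \sqrt{|a|^2 + |b|^2}$. -/
/-!
The phase shifter with `φ = arg a - arg b` gives both amplitudes the common phase `e^{i arg a}`,
reducing the problem to the real vector `(|a|, |b|) = r (sin α, cos α)` in polar form. Up to a
global phase, `M_MZI(2α)` is the reflection `[[sin α, cos α], [cos α, -sin α]]`, which sends
`r (sin α, cos α)` to `(r, 0)`.
-/

open Matrix Complex

namespace MachZehnder

noncomputable def phaseShifter (φ : ℝ) : Matrix (Fin 2) (Fin 2) ℂ :=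
  !![1, 0; 0, exp (I * φ)]

noncomputable def beamSplitter : Matrix (Fin 2) (Fin 2) ℂ :=
  (1 / (Real.sqrt 2 : ℂ)) • !![I, 1; 1, I]

noncomputable def reflection (α : ℝ) : Matrix (Fin 2) (Fin 2) ℂ :=
  !![(Real.sin α : ℂ), (Real.cos α : ℂ); (Real.cos α : ℂ), -(Real.sin α : ℂ)]

theorem beamSplitter_mul_phaseShifter_mul_beamSplitter (θ : ℝ) :
    beamSplitter * phaseShifter θ * beamSplitter =
      (1 / 2 : ℂ) • !![exp (I * θ) - 1, I * (exp (I * θ) + 1);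
                       I * (exp (I * θ) + 1), 1 - exp (I * θ)] := by
  have hhalf : (1 / (Real.sqrt 2 : ℂ)) * (1 / (Real.sqrt 2 : ℂ)) = 1 / 2 := by
    rw [one_div_mul_one_div, ← sq, ← ofReal_pow, Real.sq_sqrt zero_le_two, ofReal_ofNat]
  rw [beamSplitter, smul_mul_assoc, mul_smul_comm, Matrix.smul_mul, smul_smul, hhalf]
  congr 1
  ext i j
  fin_cases i <;> fin_cases j <;> simp [phaseShifter, Matrix.mul_apply, Fin.sum_univ_two, I_mul_I]
  · ring
  · ring
  · ring
  · linear_combination exp (I * θ) * I_mul_I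

theorem exp_I_mul_add_pi_div_two (θ : ℂ) :
    exp (I * (θ + (Real.pi : ℂ)) / 2) = I * exp (θ / 2 * I) := by
  rw [show I * (θ + (Real.pi : ℂ)) / 2 = (Real.pi : ℂ) / 2 * I + θ / 2 * I by ring, exp_add,
    exp_pi_div_two_mul_I]

theorem I_mul_exp_mul_I_mul_sin (w : ℂ) :
    I * exp (w * I) * sin w = (exp (w * I) ^ 2 - 1) / 2 := by
  rw [exp_mul_I]
  linear_combination sin w ^ 2 / 2 * I_sq - sin_sq_add_cos_sq w / 2

theorem I_mul_exp_mul_I_mul_cos (w : ℂ) :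
    I * exp (w * I) * cos w = I * (exp (w * I) ^ 2 + 1) / 2 := by
  rw [exp_mul_I]
  linear_combination -(I * sin w ^ 2 / 2) * I_sq + I * sin_sq_add_cos_sq w / 2

theorem beamSplitter_mul_phaseShifter_mul_beamSplitter_eq_smul_reflection (θ : ℝ) :
    beamSplitter * phaseShifter θ * beamSplitter =
      exp (I * ((θ : ℂ) + (Real.pi : ℂ)) / 2) • reflection (θ / 2) := by
  have hsq : exp (I * θ) = exp ((θ / 2 : ℂ) * I) ^ 2 := by rw [← exp_nat_mul]; ring_nf
  rw [beamSplitter_mul_phaseShifter_mul_beamSplitter, reflection, hsq, exp_I_mul_add_pi_div_two]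
  simp only [smul_of, smul_cons, smul_empty, smul_eq_mul, mul_neg, ofReal_sin, ofReal_cos,
    ofReal_div, ofReal_ofNat, ← mul_assoc, I_mul_exp_mul_I_mul_sin, I_mul_exp_mul_I_mul_cos]
  ext i j
  fin_cases i <;> fin_cases j <;> simp <;> ring

theorem exists_eq_sqrt_mul_sin_and_eq_sqrt_mul_cos (x y : ℝ) :
    ∃ α : ℝ, x = √(x ^ 2 + y ^ 2) * Real.sin α ∧ y = √(x ^ 2 + y ^ 2) * Real.cos α := by
  have hnorm : ‖(y : ℂ) + x * I‖ = √(x ^ 2 + y ^ 2) := by rw [norm_add_mul_I, add_comm]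
  refine ⟨arg (y + x * I), ?_, ?_⟩
  · rw [← hnorm, norm_mul_sin_arg]; simp
  · rw [← hnorm, norm_mul_cos_arg]; simp

theorem reflection_mulVec_polar (r α : ℝ) :
    reflection α *ᵥ ![((r * Real.sin α : ℝ) : ℂ), ((r * Real.cos α : ℝ) : ℂ)] =
      ![(r : ℂ), 0] := by
  have h := congrArg ((↑) : ℝ → ℂ) (Real.sin_sq_add_cos_sq α)
  push_cast at h
  ext i
  fin_cases i <;> simp [reflection, mulVec, dotProduct, Fin.sum_univ_two]
  · linear_combination (r : ℂ) * h
  · ring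

theorem phaseShifter_arg_sub_arg_mulVec (a b : ℂ) :
    phaseShifter (arg a - arg b) *ᵥ ![a, b] = exp (arg a * I) • ![(‖a‖ : ℂ), ‖b‖] := by
  have hb : exp (I * (arg a - arg b : ℝ)) * b = exp (arg a * I) * ‖b‖ := by
    calc exp (I * (arg a - arg b : ℝ)) * b
        = exp (I * (arg a - arg b : ℝ)) * (‖b‖ * exp (arg b * I)) := by
          rw [norm_mul_exp_arg_mul_I]
      _ = exp (arg a * I) * ‖b‖ := by
          rw [mul_left_comm, ← exp_add]; push_cast; ring_nf
  ext i
  fin_cases i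
  · simpa [phaseShifter, mulVec, dotProduct, Fin.sum_univ_two, mul_comm] using
      (norm_mul_exp_arg_mul_I a).symm
  · simpa [phaseShifter, mulVec, dotProduct, Fin.sum_univ_two] using hb

end MachZehnder

/-- Mach–Zehnder elimination: with the phase-shifter matrix `M_PS(φ)`, the balanced
beamsplitter `M_BS`, and the Mach–Zehnder interferometer
`M_MZI(θ) = M_BS M_PS(θ) M_BS = e^{i(θ+π)/2} [[sin(θ/2), cos(θ/2)], [cos(θ/2), -sin(θ/2)]]`,
for any input amplitudes `(a, b) ∈ ℂ²` there exist phases `θ, φ` routing all amplitude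
to the first mode: `M_MZI(θ) M_PS(φ) (a, b)ᵀ = (c, 0)ᵀ` with `|c| = √(|a|² + |b|²)`. -/
theorem mzi_elimination :
    let MPS : ℝ → Matrix (Fin 2) (Fin 2) ℂ :=
      fun φ => !![1, 0; 0, Complex.exp (Complex.I * (φ : ℂ))]
    let MBS : Matrix (Fin 2) (Fin 2) ℂ :=
      (1 / (Real.sqrt 2 : ℂ)) • !![Complex.I, 1; 1, Complex.I]
    let MMZI : ℝ → Matrix (Fin 2) (Fin 2) ℂ := fun θ => MBS * MPS θ * MBS
    (∀ θ : ℝ, MMZI θ =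
      Complex.exp (Complex.I * ((θ : ℂ) + (Real.pi : ℂ)) / 2) •
        !![(Real.sin (θ / 2) : ℂ), (Real.cos (θ / 2) : ℂ);
           (Real.cos (θ / 2) : ℂ), -(Real.sin (θ / 2) : ℂ)]) ∧
    (∀ a b : ℂ, ∃ θ φ : ℝ, ∃ c : ℂ,
      (MMZI θ * MPS φ) *ᵥ ![a, b] = ![c, 0] ∧
      ‖c‖ = Real.sqrt (‖a‖ ^ 2 + ‖b‖ ^ 2)) := by
  intro MPS MBS MMZI
  have hMZI : ∀ θ : ℝ,
      MMZI θ = exp (I * ((θ : ℂ) + (Real.pi : ℂ)) / 2) • MachZehnder.reflection (θ / 2) :=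
    MachZehnder.beamSplitter_mul_phaseShifter_mul_beamSplitter_eq_smul_reflection
  refine ⟨hMZI, fun a b => ?_⟩
  obtain ⟨α, ha, hb⟩ := MachZehnder.exists_eq_sqrt_mul_sin_and_eq_sqrt_mul_cos ‖a‖ ‖b‖
  set r := √(‖a‖ ^ 2 + ‖b‖ ^ 2)
  refine ⟨2 * α, arg a - arg b,
    exp (I * (((2 * α : ℝ) : ℂ) + (Real.pi : ℂ)) / 2) * exp (arg a * I) * r, ?_, ?_⟩
  · rw [← mulVec_mulVec, hMZI, mul_div_cancel_left₀ α two_ne_zero]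
    change _ *ᵥ (MachZehnder.phaseShifter _ *ᵥ _) = _
    rw [MachZehnder.phaseShifter_arg_sub_arg_mulVec, ha, hb, smul_mulVec, mulVec_smul,
      MachZehnder.reflection_mulVec_polar]
    ext i
    fin_cases i <;> simp [mul_assoc]
  · have hphase :
        I * (((2 * α : ℝ) : ℂ) + (Real.pi : ℂ)) / 2 = I * ((2 * α + Real.pi) / 2 : ℝ) := by
      push_cast; ring
    rw [norm_mul, norm_mul, hphase, norm_exp_I_mul_ofReal, norm_exp_ofReal_mul_I,
      norm_real, Real.norm_of_nonneg (Real.sqrt_nonneg _), one_mul, one_mul]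
end
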